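/- arXiv:1703.03561 — 13 statements merged into one kernel-verified Lean document; each statement's English description precedes it below -/
import Mathlib

section
/- Let u_i(−), u_i(+) ∈ ℝ for i ∈ {1,2,3} be left and right states, and write [[a]] = a(+) − a(−) for the jump and {a} = (a(−)+a(+))/2 for the mean. Then the jump of the triple product satisfies the symmetric split-form product rule: [[u_1·u_2·u_3]] = ((1/3){u_1·u_2} + (2/3){u_1}·{u_2})·[[u_3]] + ((1/3){u_2·u_3} + (2/3){u_2}·{u_3})·[[u_1]] + ((1/3){u_3·u_1} + (2/3){u_3}·{u_1})·[[u_2]]. -/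
/-- Symmetric split-form product rule for the jump of a triple product. -/
theorem stmt_0 (u₁m u₁p u₂m u₂p u₃m u₃p : ℝ) :
    u₁p * u₂p * u₃p - u₁m * u₂m * u₃m =
      ((1/3) * ((u₁m * u₂m + u₁p * u₂p) / 2)
          + (2/3) * ((u₁m + u₁p) / 2) * ((u₂m + u₂p) / 2)) * (u₃p - u₃m)
      + ((1/3) * ((u₂m * u₃m + u₂p * u₃p) / 2)
          + (2/3) * ((u₂m + u₂p) / 2) * ((u₃m + u₃p) / 2)) * (u₁p - u₁m)
      + ((1/3) * ((u₃m * u₁m + u₃p * u₁p) / 2)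
          + (2/3) * ((u₃m + u₃p) / 2) * ((u₁m + u₁p) / 2)) * (u₂p - u₂m) := by
  ring
end

section
/- Let u : ℝ × ℝ → ℝ^{M+1}, (t,x) ↦ u(t,x), have differentiable component functions, and suppose u is a classical solution of the hyperbolic system ∂_t u_k(t,x) + ∂_x ( f_k(u(t,x)) ) = 0 for every k ∈ {0,…,M} and every (t,x). Then the quadratic entropy U(u) = (1/2)·Σ_{k=0}^{M} u_k² satisfies the additional conservation law ∂_t ( U(u(t,x)) ) + ∂_x ( F(u(t,x)) ) = 0 at every (t,x), where F(u) = Σ_{k=0}^{M} u_k·f_k(u) − ψ(u) is the entropy flux. -/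
/-!
Full symmetry of `c` makes the flux a gradient, `f = ∇ψ`. For a gradient flux the pair
`U(u) = |u|²/2`, `F(u) = u · f(u) - ψ(u)` satisfies `∇F = u · Df = ∇U · Df`, so along a classical
solution `∂_t U + ∂_x F = u · (∂_t u + ∂_x f(u)) = 0`.
-/

open Finset

section
variable {ι : Type*} [Fintype ι] {c : ι → ι → ι → ℝ}

noncomputable def quadraticFlux (c : ι → ι → ι → ℝ) (v : ι → ℝ) (k : ι) : ℝ :=
  (1/2) * ∑ i, ∑ j, c i j k * v i * v j

noncomputable def cubicPotential (c : ι → ι → ι → ℝ) (v : ι → ℝ) : ℝ :=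
  (1/6) * ∑ i, ∑ j, ∑ k, c i j k * v i * v j * v k

theorem sum_sum_sum_swap_left (hc : ∀ i j k, c i j k = c j i k) (a b d : ι → ℝ) :
    ∑ i, ∑ j, ∑ k, c i j k * a i * b j * d k = ∑ i, ∑ j, ∑ k, c i j k * b i * a j * d k := by
  rw [sum_comm]
  refine sum_congr rfl fun j _ => sum_congr rfl fun i _ => sum_congr rfl fun k _ => ?_
  rw [hc]
  ring

theorem sum_sum_sum_swap_right (hc : ∀ i j k, c i j k = c i k j) (a b d : ι → ℝ) :
    ∑ i, ∑ j, ∑ k, c i j k * a i * b j * d k = ∑ i, ∑ j, ∑ k, c i j k * a i * d j * b k := by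
  refine sum_congr rfl fun i _ => ?_
  rw [sum_comm]
  refine sum_congr rfl fun k _ => sum_congr rfl fun j _ => ?_
  rw [hc]
  ring

theorem sum_quadraticFlux_mul (c : ι → ι → ι → ℝ) (v w : ι → ℝ) :
    ∑ k, quadraticFlux c v k * w k = (1/2) * ∑ i, ∑ j, ∑ k, c i j k * v i * v j * w k := by
  simp only [quadraticFlux, mul_sum, sum_mul]
  rw [sum_comm]
  refine sum_congr rfl fun i _ => ?_
  rw [sum_comm]
  exact sum_congr rfl fun j _ => sum_congr rfl fun k _ => by ring

theorem hasFDerivAt_cubicPotential (h₁ : ∀ i j k, c i j k = c j i k)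
    (h₂ : ∀ i j k, c i j k = c i k j) (v : ι → ℝ) :
    HasFDerivAt (cubicPotential c)
      (∑ k, quadraticFlux c v k • ContinuousLinearMap.proj k : (ι → ℝ) →L[ℝ] ℝ) v := by
  have h : ∀ i j k, HasFDerivAt (fun w : ι → ℝ => c i j k * w i * w j * w k) _ v := fun i j k =>
    (((hasFDerivAt_apply (𝕜 := ℝ) i v).const_mul (c i j k)).mul
      (hasFDerivAt_apply (𝕜 := ℝ) j v)).mul (hasFDerivAt_apply (𝕜 := ℝ) k v)
  refine ((HasFDerivAt.fun_sum (u := univ) fun i _ => HasFDerivAt.fun_sum (u := univ) fun j _ =>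
    HasFDerivAt.fun_sum (u := univ) fun k _ => h i j k).const_mul (1/6 : ℝ)).congr_fderiv ?_
  ext w
  have term₂ : ∑ i, ∑ j, ∑ k, v k * (c i j k * v i * w j)
      = ∑ i, ∑ j, ∑ k, c i j k * v i * v j * w k := by
    rw [sum_sum_sum_swap_right h₂ v v w]
    exact sum_congr rfl fun i _ => sum_congr rfl fun j _ => sum_congr rfl fun k _ => by ring
  have term₃ : ∑ i, ∑ j, ∑ k, v k * (v j * (c i j k * w i))
      = ∑ i, ∑ j, ∑ k, c i j k * v i * v j * w k := by
    rw [sum_sum_sum_swap_right h₂ v v w, sum_sum_sum_swap_left h₁ v w v]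
    exact sum_congr rfl fun i _ => sum_congr rfl fun j _ => sum_congr rfl fun k _ => by ring
  simp only [smul_apply, add_apply, FunLike.coe_sum, Finset.sum_apply,
    ContinuousLinearMap.proj_apply, smul_eq_mul, Pi.mul_apply, sum_add_distrib, mul_add, sum_quadraticFlux_mul, term₂, term₃]
  ring

theorem differentiable_quadraticFlux (c : ι → ι → ι → ℝ) :
    Differentiable ℝ (quadraticFlux c) :=
  differentiable_pi.2 fun k => by unfold quadraticFlux; fun_prop

theorem hasDerivAt_half_sum_sq {γ : ℝ → ι → ℝ} {γ' : ι → ℝ} {t : ℝ} (hγ : HasDerivAt γ γ' t) :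
    HasDerivAt (fun s => (1/2) * ∑ k, (γ s k)^2) (∑ k, γ t k * γ' k) t := by
  refine (HasDerivAt.fun_sum (u := univ) fun k _ =>
    (hasDerivAt_pi.1 hγ k).pow 2).const_mul (1/2 : ℝ) |>.congr_deriv ?_
  rw [mul_sum]
  exact sum_congr rfl fun k _ => by ring

theorem hasDerivAt_entropyFlux {f : (ι → ℝ) → ι → ℝ} {ψ : (ι → ℝ) → ℝ} {γ : ℝ → ι → ℝ}
    {γ' D : ι → ℝ} {x : ℝ}
    (hψ : HasFDerivAt ψ (∑ k, f (γ x) k • ContinuousLinearMap.proj k : (ι → ℝ) →L[ℝ] ℝ) (γ x))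
    (hγ : HasDerivAt γ γ' x) (hfγ : HasDerivAt (fun y => f (γ y)) D x) :
    HasDerivAt (fun y => ∑ k, γ y k * f (γ y) k - ψ (γ y)) (∑ k, γ x k * D k) x := by
  refine ((HasDerivAt.fun_sum (u := univ) fun k _ =>
    (hasDerivAt_pi.1 hγ k).mul (hasDerivAt_pi.1 hfγ k)).sub
      (hψ.comp_hasDerivAt x hγ)).congr_deriv ?_
  simp [sum_add_distrib, mul_comm]

theorem quadratic_entropy_conserved {f : (ι → ℝ) → ι → ℝ} {ψ : (ι → ℝ) → ℝ}
    {u : ℝ → ℝ → ι → ℝ} {t x : ℝ}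
    (hψ : HasFDerivAt ψ (∑ k, f (u t x) k • ContinuousLinearMap.proj k : (ι → ℝ) →L[ℝ] ℝ) (u t x))
    (hf : DifferentiableAt ℝ f (u t x))
    (hu : DifferentiableAt ℝ (fun p : ℝ × ℝ => u p.1 p.2) (t, x))
    (hpde : ∀ k, deriv (fun s => u s x k) t + deriv (fun y => f (u t y) k) x = 0) :
    deriv (fun s => (1/2) * ∑ k, (u s x k)^2) t
      + deriv (fun y => ∑ k, u t y k * f (u t y) k - ψ (u t y)) x = 0 := by
  have ht : HasDerivAt (fun s => u s x) _ t :=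
    DifferentiableAt.hasDerivAt <| hu.comp (f := fun s => (s, x)) t
      (differentiableAt_id.prodMk (differentiableAt_const x))
  have hx : HasDerivAt (fun y => u t y) _ x :=
    DifferentiableAt.hasDerivAt <| hu.comp (f := fun y => (t, y)) x
      ((differentiableAt_const t).prodMk differentiableAt_id)
  have hfx : HasDerivAt (fun y => f (u t y)) _ x := (hf.comp x hx.differentiableAt).hasDerivAt
  rw [(hasDerivAt_half_sum_sq ht).deriv, (hasDerivAt_entropyFlux hψ hx hfx).deriv,
    ← sum_add_distrib]
  refine sum_eq_zero fun k _ => ?_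
  have hk := hpde k
  rw [(hasDerivAt_pi.1 ht k).deriv, (hasDerivAt_pi.1 hfx k).deriv] at hk
  rw [← mul_add, hk, mul_zero]

end

/-- A classical solution of the hyperbolic system `∂_t u_k + ∂_x f_k(u) = 0`
satisfies the additional conservation law `∂_t U(u) + ∂_x F(u) = 0` for the
quadratic entropy `U(u) = (1/2) Σ_k u_k²` and the entropy flux
`F(u) = Σ_k u_k f_k(u) - ψ(u)`. -/
theorem stmt_3 (M : ℕ) (c : Fin (M+1) → Fin (M+1) → Fin (M+1) → ℝ)
    (hsymm₁ : ∀ i j k, c i j k = c j i k)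
    (hsymm₂ : ∀ i j k, c i j k = c i k j)
    (f : (Fin (M+1) → ℝ) → Fin (M+1) → ℝ)
    (hf : ∀ u k, f u k = (1/2) * ∑ i, ∑ j, c i j k * u i * u j)
    (ψ : (Fin (M+1) → ℝ) → ℝ)
    (hψ : ∀ u, ψ u = (1/6) * ∑ i, ∑ j, ∑ k, c i j k * u i * u j * u k)
    (U : (Fin (M+1) → ℝ) → ℝ)
    (hU : ∀ u, U u = (1/2) * ∑ k, (u k)^2)
    (F : (Fin (M+1) → ℝ) → ℝ)
    (hF : ∀ u, F u = (∑ k, u k * f u k) - ψ u)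
    (u : ℝ → ℝ → Fin (M+1) → ℝ)
    (hdiff : ∀ k, Differentiable ℝ (fun p : ℝ × ℝ => u p.1 p.2 k))
    (hpde : ∀ k t x, deriv (fun s => u s x k) t + deriv (fun y => f (u t y) k) x = 0) :
    ∀ t x, deriv (fun s => U (u s x)) t + deriv (fun y => F (u t y)) x = 0 := by
  obtain rfl : U = fun v => (1/2) * ∑ k, (v k)^2 := funext hU
  obtain rfl : F = fun v => (∑ k, v k * f v k) - ψ v := funext hF
  obtain rfl : f = quadraticFlux c := funext₂ hf
  obtain rfl : ψ = cubicPotential c := funext hψ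
  exact fun t x => quadratic_entropy_conserved (hasFDerivAt_cubicPotential hsymm₁ hsymm₂ _)
    (differentiable_quadraticFlux c _) (differentiable_pi.2 hdiff _) (hpde · t x)
end

section
/- The split-form numerical flux is entropy conservative in the sense of Tadmor: for all states u(−), u(+) ∈ ℝ^{M+1}, Σ_{k=0}^{M} [[u_k]]·f^num_k(u(−),u(+)) = ψ(u(+)) − ψ(u(−)), where [[u_k]] = u_k(+) − u_k(−). -/
/-- The split-form numerical flux is entropy conservative in the sense of Tadmor:
`Σ_k [[u_k]] f^num_k = ψ(u(+)) - ψ(u(-))`. -/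
theorem stmt_4 (M : ℕ) (c : Fin (M+1) → Fin (M+1) → Fin (M+1) → ℝ)
    (hsymm₁ : ∀ i j k, c i j k = c j i k)
    (hsymm₂ : ∀ i j k, c i j k = c i k j)
    (ψ : (Fin (M+1) → ℝ) → ℝ)
    (hψ : ∀ u, ψ u = (1/6) * ∑ i, ∑ j, ∑ k, c i j k * u i * u j * u k)
    (um up : Fin (M+1) → ℝ)
    (fnum : Fin (M+1) → ℝ)
    (hfnum : ∀ k, fnum k = (1/2) * ∑ i, ∑ j, c i j k *
        ((1/3) * ((um i * um j + up i * up j) / 2)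
          + (2/3) * ((um i + up i) / 2) * ((um j + up j) / 2))) :
    ∑ k, (up k - um k) * fnum k = ψ up - ψ um := by
  -- the basic triple-sum atom
  have h12 : ∀ x y z : Fin (M+1) → ℝ,
      (∑ i, ∑ j, ∑ k, c i j k * x i * y j * z k)
        = ∑ i, ∑ j, ∑ k, c i j k * y i * x j * z k := by
    intro x y z
    rw [Finset.sum_comm]
    refine Finset.sum_congr rfl fun a _ => Finset.sum_congr rfl fun b _ =>
      Finset.sum_congr rfl fun k _ => ?_
    rw [hsymm₁ b a k]; ring
  have h23 : ∀ x y z : Fin (M+1) → ℝ,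
      (∑ i, ∑ j, ∑ k, c i j k * x i * y j * z k)
        = ∑ i, ∑ j, ∑ k, c i j k * x i * z j * y k := by
    intro x y z
    refine Finset.sum_congr rfl fun i _ => ?_
    rw [Finset.sum_comm]
    refine Finset.sum_congr rfl fun a _ => Finset.sum_congr rfl fun b _ => ?_
    rw [hsymm₂ i b a]; ring
  -- rewrite the left-hand side as a triple sum in canonical index order
  set F : Fin (M+1) → Fin (M+1) → Fin (M+1) → ℝ := fun i j k =>
    (1/12) * (c i j k * (2 * (um i * um j) + 2 * (up i * up j)
      + um i * up j + up i * um j) * (up k - um k)) with hF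
  have hL : (∑ k, (up k - um k) * fnum k) = ∑ i, ∑ j, ∑ k, F i j k := by
    have e1 : (∑ k, (up k - um k) * fnum k) = ∑ k, ∑ i, ∑ j, F i j k := by
      refine Finset.sum_congr rfl fun k _ => ?_
      rw [hfnum, Finset.mul_sum, Finset.mul_sum]
      refine Finset.sum_congr rfl fun i _ => ?_
      rw [Finset.mul_sum, Finset.mul_sum]
      refine Finset.sum_congr rfl fun j _ => ?_
      simp only [hF]; ring
    rw [e1, Finset.sum_comm]
    exact Finset.sum_congr rfl fun i _ => Finset.sum_comm
  -- split the triple sum into the eight atoms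
  have hsplit : (∑ i, ∑ j, ∑ k, F i j k)
      = (1/12) * (2 * (∑ i, ∑ j, ∑ k, c i j k * um i * um j * up k)
        - 2 * (∑ i, ∑ j, ∑ k, c i j k * um i * um j * um k)
        + 2 * (∑ i, ∑ j, ∑ k, c i j k * up i * up j * up k)
        - 2 * (∑ i, ∑ j, ∑ k, c i j k * up i * up j * um k)
        + (∑ i, ∑ j, ∑ k, c i j k * um i * up j * up k)
        - (∑ i, ∑ j, ∑ k, c i j k * um i * up j * um k)
        + (∑ i, ∑ j, ∑ k, c i j k * up i * um j * up k)
        - (∑ i, ∑ j, ∑ k, c i j k * up i * um j * um k)) := by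
    simp only [Finset.mul_sum, mul_sub, mul_add, sub_eq_add_neg, neg_add_rev,
      ← Finset.sum_neg_distrib, ← Finset.sum_add_distrib]
    refine Finset.sum_congr rfl fun i _ => Finset.sum_congr rfl fun j _ =>
      Finset.sum_congr rfl fun k _ => ?_
    simp only [hF]; ring
  have e1 := (h12 um up up).trans (h23 up um up)
  -- e1 : S um up up = S up up um
  have e2 := h23 um up um
  -- e2 : S um up um = S um um up
  have e3 := (h12 up um up).trans e1
  -- e3 : S up um up = S up up um
  have e4 := (h12 up um um).trans e2
  -- e4 : S up um um = S um um up
  rw [hψ, hψ, hL]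
  linear_combination hsplit + (1/12) * e1 - (1/12) * e2 + (1/12) * e3 - (1/12) * e4
end

section
/- The split-form numerical flux coincides with Tadmor's entropy conservative flux obtained by integration along the straight line in phase space: for all states u(−), u(+) ∈ ℝ^{M+1} and every k ∈ {0,…,M}, ∫_0^1 f_k( (1−s)·u(−) + s·u(+) ) ds = (1/2)·Σ_{i,j=0}^{M} c_{ijk} ( (1/3)·{u_i·u_j} + (2/3)·{u_i}·{u_j} ) = f^num_k(u(−),u(+)). -/
lemma key_int (a b a' b' : ℝ) :
    (∫ s in (0:ℝ)..1, ((1-s)*a+s*b)*((1-s)*a'+s*b'))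
      = (1/3) * ((a*a' + b*b') / 2) + (2/3) * ((a+b)/2) * ((a'+b')/2) := by
  have h : (fun s : ℝ => ((1-s)*a+s*b)*((1-s)*a'+s*b'))
      = fun s : ℝ => a*a' + (a*b'+a'*b-2*(a*a'))*s + (a*a'-a*b'-a'*b+b*b')*s^2 := by
    funext s; ring
  rw [h]
  have i1 : IntervalIntegrable (fun _ : ℝ => a*a') MeasureTheory.volume 0 1 :=
    intervalIntegrable_const
  have i2 : IntervalIntegrable (fun s : ℝ => (a*b'+a'*b-2*(a*a'))*s) MeasureTheory.volume 0 1 :=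
    (continuous_const.mul continuous_id).intervalIntegrable _ _
  have i3 : IntervalIntegrable (fun s : ℝ => (a*a'-a*b'-a'*b+b*b')*s^2) MeasureTheory.volume 0 1 :=
    (continuous_const.mul (continuous_pow 2)).intervalIntegrable _ _
  rw [intervalIntegral.integral_add (i1.add i2) i3, intervalIntegral.integral_add i1 i2,
      intervalIntegral.integral_const, intervalIntegral.integral_const_mul,
      intervalIntegral.integral_const_mul, integral_id, integral_pow]
  norm_num
  ring

open intervalIntegral in
/-- The split-form numerical flux coincides with Tadmor's entropy conservative flux
obtained by integration along the straight line in phase space. -/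
theorem stmt_5 (M : ℕ) (c : Fin (M+1) → Fin (M+1) → Fin (M+1) → ℝ)
    (hsymm₁ : ∀ i j k, c i j k = c j i k)
    (hsymm₂ : ∀ i j k, c i j k = c i k j)
    (f : (Fin (M+1) → ℝ) → Fin (M+1) → ℝ)
    (hf : ∀ u k, f u k = (1/2) * ∑ i, ∑ j, c i j k * u i * u j)
    (um up : Fin (M+1) → ℝ)
    (fnum : Fin (M+1) → ℝ)
    (hfnum : ∀ k, fnum k = (1/2) * ∑ i, ∑ j, c i j k *
        ((1/3) * ((um i * um j + up i * up j) / 2)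
          + (2/3) * ((um i + up i) / 2) * ((um j + up j) / 2)))
    (k : Fin (M+1)) :
    (∫ s in (0:ℝ)..1, f (fun i => (1 - s) * um i + s * up i) k)
      = (1/2) * ∑ i, ∑ j, c i j k *
          ((1/3) * ((um i * um j + up i * up j) / 2)
            + (2/3) * ((um i + up i) / 2) * ((um j + up j) / 2))
    ∧ (∫ s in (0:ℝ)..1, f (fun i => (1 - s) * um i + s * up i) k) = fnum k := by
  have main : (∫ s in (0:ℝ)..1, f (fun i => (1 - s) * um i + s * up i) k)
      = (1/2) * ∑ i, ∑ j, c i j k *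
          ((1/3) * ((um i * um j + up i * up j) / 2)
            + (2/3) * ((um i + up i) / 2) * ((um j + up j) / 2)) := by
    simp only [hf]
    rw [intervalIntegral.integral_const_mul]
    rw [intervalIntegral.integral_finset_sum (fun i _ => by
      apply Continuous.intervalIntegrable
      exact continuous_finset_sum _ (fun j _ => by fun_prop))]
    congr 1
    refine Finset.sum_congr rfl (fun i _ => ?_)
    rw [intervalIntegral.integral_finset_sum (fun j _ => by
      apply Continuous.intervalIntegrable; fun_prop)]
    refine Finset.sum_congr rfl (fun j _ => ?_)
    have : (fun s : ℝ => c i j k * ((1 - s) * um i + s * up i) * ((1 - s) * um j + s * up j))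
        = fun s : ℝ => c i j k * (((1-s)*um i + s*up i) * ((1-s)*um j + s*up j)) := by
      funext s; ring
    rw [this, intervalIntegral.integral_const_mul, key_int]
  exact ⟨main, by rw [main, hfnum]⟩
end

section
/- Case M = 2 of the polynomial chaos system for Burgers' equation: let u_0(±), u_1(±), u_2(±) ∈ ℝ be left and right states, let f_{00}, f_{22} ∈ ℝ be arbitrary, let ψ(u_0,u_1,u_2) = u_0³/6 + u_0·u_1²/2 + u_0·u_2²/2 + (√2/2)·u_1²·u_2 + (√2/3)·u_2³, and let the numerical flux be f^num = ( f_{00} + (1/2)·{u_1²} + (1/2)·{u_2²}, {u_0}·{u_1} + √2·{u_1}·{u_2}, 2√2·f_{22} + {u_0}·{u_2} + (√2/2)·{u_1²} ). Then Σ_{k=0}^{2} [[u_k]]·f^num_k − [[ψ]] = f_{00}·[[u_0]] − (1/6)·[[u_0³]] + 2√2·( f_{22}·[[u_2]] − (1/6)·[[u_2³]] ). -/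
/-- Case M = 2 of the polynomial chaos system for Burgers' equation:
`Σ_k [[u_k]] f^num_k − [[ψ]] = f₀₀ [[u₀]] − (1/6)[[u₀³]] + 2√2 (f₂₂ [[u₂]] − (1/6)[[u₂³]])`. -/
theorem stmt_8 (u₀m u₀p u₁m u₁p u₂m u₂p f₀₀ f₂₂ : ℝ)
    (ψ : ℝ → ℝ → ℝ → ℝ)
    (hψ : ∀ u₀ u₁ u₂, ψ u₀ u₁ u₂ =
      u₀^3 / 6 + u₀ * u₁^2 / 2 + u₀ * u₂^2 / 2
        + (Real.sqrt 2 / 2) * u₁^2 * u₂ + (Real.sqrt 2 / 3) * u₂^3)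
    (fnum₀ fnum₁ fnum₂ : ℝ)
    (hfnum₀ : fnum₀ = f₀₀ + (1/2) * ((u₁m^2 + u₁p^2) / 2) + (1/2) * ((u₂m^2 + u₂p^2) / 2))
    (hfnum₁ : fnum₁ = ((u₀m + u₀p) / 2) * ((u₁m + u₁p) / 2)
        + Real.sqrt 2 * ((u₁m + u₁p) / 2) * ((u₂m + u₂p) / 2))
    (hfnum₂ : fnum₂ = 2 * Real.sqrt 2 * f₂₂ + ((u₀m + u₀p) / 2) * ((u₂m + u₂p) / 2)
        + (Real.sqrt 2 / 2) * ((u₁m^2 + u₁p^2) / 2)) :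
    (u₀p - u₀m) * fnum₀ + (u₁p - u₁m) * fnum₁ + (u₂p - u₂m) * fnum₂
        - (ψ u₀p u₁p u₂p - ψ u₀m u₁m u₂m)
      = f₀₀ * (u₀p - u₀m) - (1/6) * (u₀p^3 - u₀m^3)
        + 2 * Real.sqrt 2 * (f₂₂ * (u₂p - u₂m) - (1/6) * (u₂p^3 - u₂m^3)) := by
  have h2 : Real.sqrt 2 ^ 2 = 2 := Real.sq_sqrt (by norm_num)
  subst hfnum₀ hfnum₁ hfnum₂
  rw [hψ, hψ]
  ring
end

section
/- Case M = 3 of the polynomial chaos system for Burgers' equation: let u_0(±), …, u_3(±) ∈ ℝ be left and right states, let f_{00}, f_{22} ∈ ℝ be arbitrary, let ψ(u_0,u_1,u_2,u_3) = u_0³/6 + u_0·u_1²/2 + u_0·u_2²/2 + u_0·u_3²/2 + (√2/2)·u_1²·u_2 + √3·u_1·u_2·u_3 + (√2/3)·u_2³ + (3√2/2)·u_2·u_3², and let the numerical flux be f^num_0 = f_{00} + (1/2)·{u_1²} + (1/2)·{u_2²} + (1/2)·{u_3²}, f^num_1 = {u_0}·{u_1} + √2·{u_1}·{u_2} + √3·(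 (1/3)·{u_2·u_3} + (2/3)·{u_2}·{u_3} ), f^num_2 = {u_0}·{u_2} + (√2/2)·{u_1²} + √3·( (1/3)·{u_1·u_3} + (2/3)·{u_1}·{u_3} ) + 2√2·f_{22} + (3√2/2)·{u_3²}, f^num_3 = {u_0}·{u_3} + √3·( (1/3)·{u_1·u_2} + (2/3)·{u_1}·{u_2} ) + 3√2·{u_2}·{u_3}. Then Σ_{k=0}^{3} [[u_k]]·f^num_k − [[ψ]] = f_{00}·[[u_0]] − (1/6)·[[u_0³]] + 2√2·( f_{22}·[[u_2]] − (1/6)·[[u_2³]] ). -/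
/-- Case M = 3 of the polynomial chaos system for Burgers' equation:
`Σ_k [[u_k]] f^num_k − [[ψ]] = f₀₀ [[u₀]] − (1/6)[[u₀³]] + 2√2 (f₂₂ [[u₂]] − (1/6)[[u₂³]])`. -/
theorem stmt_9 (u₀m u₀p u₁m u₁p u₂m u₂p u₃m u₃p f₀₀ f₂₂ : ℝ)
    (ψ : ℝ → ℝ → ℝ → ℝ → ℝ)
    (hψ : ∀ u₀ u₁ u₂ u₃, ψ u₀ u₁ u₂ u₃ =
      u₀^3 / 6 + u₀ * u₁^2 / 2 + u₀ * u₂^2 / 2 + u₀ * u₃^2 / 2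
        + (Real.sqrt 2 / 2) * u₁^2 * u₂ + Real.sqrt 3 * u₁ * u₂ * u₃
        + (Real.sqrt 2 / 3) * u₂^3 + (3 * Real.sqrt 2 / 2) * u₂ * u₃^2)
    (fnum₀ fnum₁ fnum₂ fnum₃ : ℝ)
    (hfnum₀ : fnum₀ = f₀₀ + (1/2) * ((u₁m^2 + u₁p^2) / 2)
        + (1/2) * ((u₂m^2 + u₂p^2) / 2) + (1/2) * ((u₃m^2 + u₃p^2) / 2))
    (hfnum₁ : fnum₁ = ((u₀m + u₀p) / 2) * ((u₁m + u₁p) / 2)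
        + Real.sqrt 2 * ((u₁m + u₁p) / 2) * ((u₂m + u₂p) / 2)
        + Real.sqrt 3 * ((1/3) * ((u₂m * u₃m + u₂p * u₃p) / 2)
            + (2/3) * ((u₂m + u₂p) / 2) * ((u₃m + u₃p) / 2)))
    (hfnum₂ : fnum₂ = ((u₀m + u₀p) / 2) * ((u₂m + u₂p) / 2)
        + (Real.sqrt 2 / 2) * ((u₁m^2 + u₁p^2) / 2)
        + Real.sqrt 3 * ((1/3) * ((u₁m * u₃m + u₁p * u₃p) / 2)
            + (2/3) * ((u₁m + u₁p) / 2) * ((u₃m + u₃p) / 2))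
        + 2 * Real.sqrt 2 * f₂₂ + (3 * Real.sqrt 2 / 2) * ((u₃m^2 + u₃p^2) / 2))
    (hfnum₃ : fnum₃ = ((u₀m + u₀p) / 2) * ((u₃m + u₃p) / 2)
        + Real.sqrt 3 * ((1/3) * ((u₁m * u₂m + u₁p * u₂p) / 2)
            + (2/3) * ((u₁m + u₁p) / 2) * ((u₂m + u₂p) / 2))
        + 3 * Real.sqrt 2 * ((u₂m + u₂p) / 2) * ((u₃m + u₃p) / 2)) :
    (u₀p - u₀m) * fnum₀ + (u₁p - u₁m) * fnum₁ + (u₂p - u₂m) * fnum₂ + (u₃p - u₃m) * fnum₃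
        - (ψ u₀p u₁p u₂p u₃p - ψ u₀m u₁m u₂m u₃m)
      = f₀₀ * (u₀p - u₀m) - (1/6) * (u₀p^3 - u₀m^3)
        + 2 * Real.sqrt 2 * (f₂₂ * (u₂p - u₂m) - (1/6) * (u₂p^3 - u₂m^3)) := by
  subst hfnum₀ hfnum₁ hfnum₂ hfnum₃
  rw [hψ, hψ]
  ring
end

section
/- Entropy stability of the local Lax–Friedrichs–type flux: let u(−), u(+) ∈ ℝ^{M+1}, let A(u) be the symmetric real (M+1)×(M+1) matrix with entries [A(u)]_{jk} = Σ_{i=0}^{M} c_{ijk} u_i, and let λ = max{ |λ(−)|, |λ(+)| }, where |λ(±)| is the greatest absolute value of the (real) eigenvalues of A(u(±)). Then the dissipative numerical flux f^num_k(u(−),u(+)) − (λ/2)·[[u_k]] is entropy stable in the sense of Tadmor: Σ_{k=0}^{M} [[u_k]]·( f^num_k(u(−),u(+)) − (λ/2)·[[u_k]] ) ≤ ψ(u(+)) − ψ(u(−)). -/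
/-- Entropy stability of the local Lax–Friedrichs–type flux: the entropy conservative
split-form flux augmented by `-(λ/2)[[u]]`, where `λ` is the maximum over the two states
of the greatest absolute value of the eigenvalues of the symmetric matrix `A(u)`,
is entropy stable in the sense of Tadmor. -/
theorem stmt_10 (M : ℕ) (c : Fin (M+1) → Fin (M+1) → Fin (M+1) → ℝ)
    (hsymm₁ : ∀ i j k, c i j k = c j i k)
    (hsymm₂ : ∀ i j k, c i j k = c i k j)
    (ψ : (Fin (M+1) → ℝ) → ℝ)
    (hψ : ∀ u, ψ u = (1/6) * ∑ i, ∑ j, ∑ k, c i j k * u i * u j * u k)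
    (um up : Fin (M+1) → ℝ)
    (A : (Fin (M+1) → ℝ) → Matrix (Fin (M+1)) (Fin (M+1)) ℝ)
    (hA : ∀ u, A u = Matrix.of fun j k => ∑ i, c i j k * u i)
    (hAm : (A um).IsHermitian) (hAp : (A up).IsHermitian)
    (lam : ℝ)
    (hlam : lam = max
        (Finset.univ.sup' Finset.univ_nonempty fun i => |hAm.eigenvalues i|)
        (Finset.univ.sup' Finset.univ_nonempty fun i => |hAp.eigenvalues i|))
    (fnum : Fin (M+1) → ℝ)
    (hfnum : ∀ k, fnum k = (1/2) * ∑ i, ∑ j, c i j k *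
        ((1/3) * ((um i * um j + up i * up j) / 2)
          + (2/3) * ((um i + up i) / 2) * ((um j + up j) / 2))) :
    ∑ k, (up k - um k) * (fnum k - lam / 2 * (up k - um k)) ≤ ψ up - ψ um := by
  have hlam0 : 0 ≤ lam := by
    rw [hlam]
    exact le_trans (abs_nonneg (hAm.eigenvalues 0))
      (le_trans (Finset.le_sup' (fun i => |hAm.eigenvalues i|) (Finset.mem_univ (0 : Fin (M+1)))) (le_max_left _ _))
  set S : (Fin (M+1) → ℝ) → (Fin (M+1) → ℝ) → (Fin (M+1) → ℝ) → ℝ :=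
    fun f g h => ∑ i, ∑ j, ∑ k, c i j k * f i * g j * h k with hS
  have swap12 : ∀ f g h, S f g h = S g f h := by
    intro f g h
    rw [hS]
    simp only
    rw [Finset.sum_comm]
    refine Finset.sum_congr rfl fun j _ => Finset.sum_congr rfl fun i _ =>
      Finset.sum_congr rfl fun k _ => ?_
    rw [hsymm₁]; ring
  have swap23 : ∀ f g h, S f g h = S f h g := by
    intro f g h
    rw [hS]
    simp only
    refine Finset.sum_congr rfl fun i _ => ?_
    rw [Finset.sum_comm]
    refine Finset.sum_congr rfl fun k _ => Finset.sum_congr rfl fun j _ => ?_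
    rw [hsymm₂]; ring
  have expand : ∑ k, (up k - um k) * fnum k
      = (1/12) * (2*S um um up + S um up up + S up um up + 2*S up up up
          - (2*S um um um + S um up um + S up um um + 2*S up up um)) := by
    have lhs : ∑ k, (up k - um k) * fnum k
        = ∑ i, ∑ j, ∑ k, (up k - um k) * ((1/2) * (c i j k *
            ((1/3) * ((um i * um j + up i * up j) / 2)
              + (2/3) * ((um i + up i) / 2) * ((um j + up j) / 2)))) := by
      simp only [hfnum, Finset.mul_sum]
      rw [Finset.sum_comm]
      exact Finset.sum_congr rfl fun i _ => Finset.sum_comm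
    rw [lhs, hS]
    simp only [Finset.mul_sum, ← Finset.sum_add_distrib, ← Finset.sum_sub_distrib]
    refine Finset.sum_congr rfl fun i _ => Finset.sum_congr rfl fun j _ =>
      Finset.sum_congr rfl fun k _ => ?_
    ring
  have e1 : S um up up = S up um up := swap12 _ _ _
  have e2 : S up um up = S up up um := swap23 _ _ _
  have e3 : S um um up = S um up um := swap23 _ _ _
  have e4 : S um up um = S up um um := swap12 _ _ _
  have key : ∑ k, (up k - um k) * fnum k = ψ up - ψ um := by
    rw [hψ, hψ, expand]
    have hup : ∑ i, ∑ j, ∑ k, c i j k * up i * up j * up k = S up up up := rfl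
    have hum : ∑ i, ∑ j, ∑ k, c i j k * um i * um j * um k = S um um um := rfl
    rw [hup, hum]
    linarith [e1, e2, e3, e4]
  have split : ∑ k, (up k - um k) * (fnum k - lam / 2 * (up k - um k))
      = (∑ k, (up k - um k) * fnum k) - lam / 2 * ∑ k, (up k - um k)^2 := by
    rw [Finset.mul_sum, ← Finset.sum_sub_distrib]
    exact Finset.sum_congr rfl fun k _ => by ring
  rw [split, key]
  have hpos : 0 ≤ lam / 2 * ∑ k, (up k - um k)^2 :=
    mul_nonneg (by linarith) (Finset.sum_nonneg fun k _ => sq_nonneg _)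
  linarith
end

section
/- Subcell flux-differencing recovers the split form: let p, M ∈ ℕ, let D be a real (p+1)×(p+1) matrix whose rows sum to zero (D·𝟙 = 0), and let u_0, …, u_M ∈ ℝ^{p+1} be nodal vectors with entries u_{i,m}. Then for every node index n ∈ {0,…,p} and every k ∈ {0,…,M}: Σ_{m=0}^{p} 2·D_{n,m} · (1/2)·Σ_{i,j=0}^{M} c_{ijk}·( (1/3)·(u_{i,m}·u_{j,m} + u_{i,n}·u_{j,n})/2 + (2/3)·((u_{i,m}+u_{i,n})/2)·((u_{j,m}+u_{j,n})/2) ) = (1/3)·Σ_{i,j=0}^{M} c_{ijk}·( D(u_i∘u_j) + u_j∘(D·u_i) )_n, where v∘w denotes the componentwise product of vectors. -/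
/-- Subcell flux-differencing with the entropy conservative split-form flux recovers the
split form of the volume terms. -/
theorem stmt_11 (p M : ℕ) (c : Fin (M+1) → Fin (M+1) → Fin (M+1) → ℝ)
    (hsymm₁ : ∀ i j k, c i j k = c j i k)
    (hsymm₂ : ∀ i j k, c i j k = c i k j)
    (D : Matrix (Fin (p+1)) (Fin (p+1)) ℝ)
    (hD : ∀ n, ∑ m, D n m = 0)
    (u : Fin (M+1) → Fin (p+1) → ℝ)
    (n : Fin (p+1)) (k : Fin (M+1)) :
    ∑ m, 2 * D n m * ((1/2) * ∑ i, ∑ j, c i j k *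
        ((1/3) * ((u i m * u j m + u i n * u j n) / 2)
          + (2/3) * ((u i m + u i n) / 2) * ((u j m + u j n) / 2)))
      = (1/3) * ∑ i, ∑ j, c i j k *
          (D.mulVec (u i * u j) n + u j n * D.mulVec (u i) n) := by
  have key : ∀ (g : Fin (M+1) → Fin (M+1) → ℝ),
      ∑ i, ∑ j, c i j k * g i j = ∑ i, ∑ j, c i j k * g j i := by
    intro g
    rw [Finset.sum_comm]
    exact Finset.sum_congr rfl fun j _ => Finset.sum_congr rfl fun i _ => by
      rw [hsymm₁]
  have hL : ∑ m, 2 * D n m * ((1/2) * ∑ i, ∑ j, c i j k *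
        ((1/3) * ((u i m * u j m + u i n * u j n) / 2)
          + (2/3) * ((u i m + u i n) / 2) * ((u j m + u j n) / 2)))
      = ∑ i, ∑ j, c i j k * ((1/3) * (∑ m, D n m * (u i m * u j m))
          + (1/6) * (u j n * ∑ m, D n m * u i m)
          + (1/6) * (u i n * ∑ m, D n m * u j m)) := by
    simp only [Finset.mul_sum]
    rw [Finset.sum_comm]
    refine Finset.sum_congr rfl fun i _ => ?_
    rw [Finset.sum_comm]
    refine Finset.sum_congr rfl fun j _ => ?_
    have expand : ∀ m, 2 * D n m * (1/2 * (c i j k *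
        ((1/3) * ((u i m * u j m + u i n * u j n) / 2)
          + (2/3) * ((u i m + u i n) / 2) * ((u j m + u j n) / 2))))
      = c i j k * ((1/3) * (D n m * (u i m * u j m)))
        + c i j k * ((1/6) * (u j n * (D n m * u i m)))
        + c i j k * ((1/6) * (u i n * (D n m * u j m)))
        + (c i j k * ((1/3) * (u i n * u j n))) * D n m := by
      intro m; ring
    rw [Finset.sum_congr rfl fun m _ => expand m]
    simp only [Finset.sum_add_distrib, ← Finset.mul_sum, ← Finset.sum_mul, hD,
      mul_zero, add_zero]
    ring
  rw [hL]
  have hswap : ∑ i, ∑ j, c i j k * ((1/6) * (u i n * ∑ m, D n m * u j m))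
      = ∑ i, ∑ j, c i j k * ((1/6) * (u j n * ∑ m, D n m * u i m)) := by
    rw [Finset.sum_comm]
    exact Finset.sum_congr rfl fun i _ => Finset.sum_congr rfl fun j _ => by
      rw [hsymm₁]
  simp only [mul_add, Finset.sum_add_distrib]
  rw [hswap]
  simp only [Matrix.mulVec, dotProduct, Pi.mul_apply, Finset.mul_sum]
  simp only [← Finset.sum_add_distrib]
  refine Finset.sum_congr rfl fun i _ => Finset.sum_congr rfl fun j _ => ?_
  exact Finset.sum_congr rfl fun m _ => by ring
end

section
/- Conservation across elements (first part of Theorem 1): under the stated summation-by-parts hypotheses, for every k ∈ {0,…,M} the semidiscrete right-hand side satisfies 𝟙ᵀ·P·RHS_k = −𝟙ᵀ·Rᵀ·B·f^num_k, i.e. the rate of change of the discrete integral of u_k over the element equals the difference of the numerical fluxes at the element boundary. -/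
/-!
Test `RHS_k` against `𝟙` in the `P` inner product. Since `D 𝟙 = 0`, the SBP identity gives
`𝟙ᵀ P D = 𝟙ᵀ Rᵀ B R`, so the divergence part `D (u_i ∘ u_j)` integrates to the boundary term
`𝟙ᵀ Rᵀ B R (u_i ∘ u_j)`, while the advective part integrates to `u_jᵀ P D u_i`. Symmetrizing in
`(i, j)` (as `c_{ijk} = c_{jik}`) and using SBP once more turns the latter into
`½ (R u_i)ᵀ B (R u_j)`, which equals `½ 𝟙ᵀ Rᵀ B (R u_i ∘ R u_j)` because `B` is diagonal and
`R 𝟙 = 𝟙`. Both are exactly the corrections subtracted from `f^num_k`, so only the numerical flux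
survives.
-/

section Symmetrization

variable {ι α : Type*} [Fintype ι] [NonUnitalNonAssocSemiring α]

theorem sum_sum_mul_swap_of_symm {c : ι → ι → α} (hc : ∀ i j, c i j = c j i)
    (q : ι → ι → α) : ∑ i, ∑ j, c i j * q j i = ∑ i, ∑ j, c i j * q i j := by
  rw [Finset.sum_comm]
  simp only [hc]

end Symmetrization

namespace Matrix

variable {α n m : Type*} [Fintype n] [Fintype m]

section CommSemiring

variable [CommSemiring α]

theorem one_dotProduct_diagonal_mul_mulVec [DecidableEq m] (d : m → α) (X : Matrix m n α)
    (v : n → α) : 1 ⬝ᵥ (diagonal d * X) *ᵥ v = d ⬝ᵥ X *ᵥ v := by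
  simp only [← mulVec_mulVec, dotProduct, mulVec_diagonal, Pi.one_apply, one_mul]

theorem one_dotProduct_diagonal_mulVec_mul [DecidableEq m] (d x y : m → α) :
    1 ⬝ᵥ diagonal d *ᵥ (x * y) = x ⬝ᵥ diagonal d *ᵥ y := by
  simp only [dotProduct, mulVec_diagonal, Pi.one_apply, one_mul, Pi.mul_apply]
  exact Finset.sum_congr rfl fun _ _ => by ring

theorem one_dotProduct_transpose_mul_mulVec {R : Matrix m n α} (hR : R *ᵥ 1 = 1)
    {o : Type*} [Fintype o] (X : Matrix m o α) (v : o → α) :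
    1 ⬝ᵥ (Rᵀ * X) *ᵥ v = 1 ⬝ᵥ X *ᵥ v := by
  rw [← mulVec_mulVec, dotProduct_mulVec, vecMul_transpose, hR]

variable {P D : Matrix n n α} {R : Matrix m n α} {B : Matrix m m α}

theorem one_dotProduct_mulVec_mulVec_of_sbp (hD : D *ᵥ 1 = 0)
    (hSBP : P * D + Dᵀ * P = Rᵀ * B * R) (v : n → α) :
    1 ⬝ᵥ P *ᵥ (D *ᵥ v) = 1 ⬝ᵥ (Rᵀ * B) *ᵥ (R *ᵥ v) := by
  have hDP : 1 ᵥ* (Dᵀ * P) = 0 := by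
    rw [← vecMul_vecMul, vecMul_transpose, hD, zero_vecMul]
  have hPD : 1 ᵥ* (P * D) = 1 ᵥ* (Rᵀ * B * R) := by
    rw [← hSBP, vecMul_add, hDP, add_zero]
  rw [mulVec_mulVec, mulVec_mulVec, dotProduct_mulVec, hPD, ← dotProduct_mulVec]

theorem dotProduct_mulVec_add_swap_of_sbp (hPt : Pᵀ = P)
    (hSBP : P * D + Dᵀ * P = Rᵀ * B * R) (v w : n → α) :
    v ⬝ᵥ (P * D) *ᵥ w + w ⬝ᵥ (P * D) *ᵥ v = (R *ᵥ v) ⬝ᵥ B *ᵥ (R *ᵥ w) := by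
  have hswap : w ⬝ᵥ (P * D) *ᵥ v = v ⬝ᵥ (Dᵀ * P) *ᵥ w := by
    rw [dotProduct_comm, ← vecMul_transpose, ← dotProduct_mulVec, transpose_mul, hPt]
  rw [hswap, ← dotProduct_add, ← add_mulVec, hSBP, ← mulVec_mulVec, dotProduct_mulVec,
    ← vecMul_vecMul, vecMul_transpose, ← dotProduct_mulVec]

end CommSemiring

variable [Field α] [CharZero α] [DecidableEq n] [DecidableEq m]
  {P D : Matrix n n α} {R : Matrix m n α} {d : m → α}

theorem one_dotProduct_mulVec_splitForm_of_sbp (hPdet : IsUnit P.det) (hPt : Pᵀ = P)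
    (hD : D *ᵥ 1 = 0) (hR : R *ᵥ 1 = 1) (hSBP : P * D + Dᵀ * P = Rᵀ * diagonal d * R)
    {ι : Type*} [Fintype ι] {c : ι → ι → α} (hc : ∀ i j, c i j = c j i) (u : ι → n → α) :
    1 ⬝ᵥ P *ᵥ ∑ i, ∑ j, c i j • (D *ᵥ (u i * u j) + (P⁻¹ * diagonal (u j) * P * D) *ᵥ u i)
      = 1 ⬝ᵥ (Rᵀ * diagonal d) *ᵥ
          ∑ i, ∑ j, c i j • (R *ᵥ (u i * u j) + (1 / 2 : α) • (R *ᵥ u i * R *ᵥ u j)) := by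
  have hvol : ∀ i j, 1 ⬝ᵥ P *ᵥ (D *ᵥ (u i * u j) + (P⁻¹ * diagonal (u j) * P * D) *ᵥ u i)
      = 1 ⬝ᵥ (Rᵀ * diagonal d) *ᵥ (R *ᵥ (u i * u j)) + u j ⬝ᵥ (P * D) *ᵥ u i := by
    intro i j
    have hcancel : P * (P⁻¹ * diagonal (u j) * P * D) = diagonal (u j) * (P * D) := by
      simp only [Matrix.mul_assoc, mul_nonsing_inv_cancel_left P _ hPdet]
    rw [mulVec_add, dotProduct_add, one_dotProduct_mulVec_mulVec_of_sbp hD hSBP,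
      mulVec_mulVec (u i) P, hcancel, one_dotProduct_diagonal_mul_mulVec]
  have hbdry : ∀ i j, 1 ⬝ᵥ (Rᵀ * diagonal d) *ᵥ (R *ᵥ u i * R *ᵥ u j)
      = u i ⬝ᵥ (P * D) *ᵥ u j + u j ⬝ᵥ (P * D) *ᵥ u i := by
    intro i j
    rw [one_dotProduct_transpose_mul_mulVec hR, one_dotProduct_diagonal_mulVec_mul,
      dotProduct_mulVec_add_swap_of_sbp hPt hSBP]
  simp only [mulVec_sum, dotProduct_sum, mulVec_smul, dotProduct_smul, hvol]
  simp only [mulVec_add, dotProduct_add, mulVec_smul, dotProduct_smul, hbdry, smul_eq_mul,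
    mul_add, Finset.sum_add_distrib, mul_left_comm (c _ _) (1 / 2), ← Finset.mul_sum]
  rw [sum_sum_mul_swap_of_symm hc fun i j => u i ⬝ᵥ (P * D) *ᵥ u j]
  ring

end Matrix

open Matrix in
theorem stmt_12_general (p M : ℕ) (c : Fin (M+1) → Fin (M+1) → Fin (M+1) → ℝ)
    (hsymm₁ : ∀ i j k, c i j k = c j i k)
    (P D : Matrix (Fin (p+1)) (Fin (p+1)) ℝ)
    (hP : P.PosDef)
    (hD : D.mulVec (fun _ => 1) = 0)
    (R : Matrix (Fin 2) (Fin (p+1)) ℝ)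
    (hR : R.mulVec (fun _ => 1) = fun _ => 1)
    (B : Matrix (Fin 2) (Fin 2) ℝ)
    (hB : B = Matrix.diagonal ![(-1 : ℝ), 1])
    (hSBP : P * D + Dᵀ * P = Rᵀ * B * R)
    (u : Fin (M+1) → Fin (p+1) → ℝ)
    (fnum : Fin (M+1) → Fin 2 → ℝ)
    (RHS : Fin (M+1) → Fin (p+1) → ℝ)
    (hRHS : ∀ k, RHS k =
      -((1/3 : ℝ) • ∑ i, ∑ j, c i j k •
          (D.mulVec (u i * u j) + (P⁻¹ * Matrix.diagonal (u j) * P * D).mulVec (u i)))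
      - (P⁻¹ * Rᵀ * B).mulVec (fnum k - ∑ i, ∑ j, c i j k •
          ((1/3 : ℝ) • R.mulVec (u i * u j)
            + (1/6 : ℝ) • (R.mulVec (u i) * R.mulVec (u j)))))
    (k : Fin (M+1)) :
    (fun _ => (1:ℝ)) ⬝ᵥ P.mulVec (RHS k)
      = -((fun _ => (1:ℝ)) ⬝ᵥ (Rᵀ * B).mulVec (fnum k)) := by
  simp only [← Pi.one_def] at hD hR ⊢
  obtain ⟨d, rfl⟩ : ∃ d, B = diagonal d := ⟨_, hB⟩
  have hPt : Pᵀ = P := by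
    simpa only [conjTranspose_eq_transpose_of_trivial] using hP.isHermitian.eq
  have hPdet : IsUnit P.det := (isUnit_iff_isUnit_det P).mp hP.isUnit
  have hflux : P * (P⁻¹ * Rᵀ * diagonal d) = Rᵀ * diagonal d := by
    rw [Matrix.mul_assoc, mul_nonsing_inv_cancel_left P _ hPdet]
  have hboundary : ∑ i, ∑ j, c i j k • ((1/3 : ℝ) • R *ᵥ (u i * u j)
        + (1/6 : ℝ) • (R *ᵥ u i * R *ᵥ u j))
      = (1/3 : ℝ) • ∑ i, ∑ j, c i j k •
          (R *ᵥ (u i * u j) + (1/2 : ℝ) • (R *ᵥ u i * R *ᵥ u j)) := by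
    simp only [Finset.smul_sum]
    exact Finset.sum_congr rfl fun i _ => Finset.sum_congr rfl fun j _ => by module
  rw [hRHS k, mulVec_sub, mulVec_neg, mulVec_smul, dotProduct_sub, dotProduct_neg,
    dotProduct_smul, one_dotProduct_mulVec_splitForm_of_sbp hPdet hPt hD hR hSBP
      (fun i j => hsymm₁ i j k), mulVec_mulVec, hflux, hboundary, mulVec_sub, dotProduct_sub,
    mulVec_smul, dotProduct_smul]
  simp only [smul_eq_mul]
  ring

open Matrix in
/-- Conservation across elements (first part of Theorem 1): under the SBP hypotheses,
`𝟙ᵀ P RHS_k = -𝟙ᵀ Rᵀ B f^num_k` for every component `k`. -/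
theorem stmt_12 (p M : ℕ) (c : Fin (M+1) → Fin (M+1) → Fin (M+1) → ℝ)
    (hsymm₁ : ∀ i j k, c i j k = c j i k)
    (hsymm₂ : ∀ i j k, c i j k = c i k j)
    (P D : Matrix (Fin (p+1)) (Fin (p+1)) ℝ)
    (hP : P.PosDef)
    (hD : D.mulVec (fun _ => 1) = 0)
    (R : Matrix (Fin 2) (Fin (p+1)) ℝ)
    (hR : R.mulVec (fun _ => 1) = fun _ => 1)
    (B : Matrix (Fin 2) (Fin 2) ℝ)
    (hB : B = Matrix.diagonal ![(-1 : ℝ), 1])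
    (hSBP : P * D + Dᵀ * P = Rᵀ * B * R)
    (u : Fin (M+1) → Fin (p+1) → ℝ)
    (fnum : Fin (M+1) → Fin 2 → ℝ)
    (RHS : Fin (M+1) → Fin (p+1) → ℝ)
    (hRHS : ∀ k, RHS k =
      -((1/3 : ℝ) • ∑ i, ∑ j, c i j k •
          (D.mulVec (u i * u j) + (P⁻¹ * Matrix.diagonal (u j) * P * D).mulVec (u i)))
      - (P⁻¹ * Rᵀ * B).mulVec (fnum k - ∑ i, ∑ j, c i j k •
          ((1/3 : ℝ) • R.mulVec (u i * u j)
            + (1/6 : ℝ) • (R.mulVec (u i) * R.mulVec (u j)))))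
    (k : Fin (M+1)) :
    (fun _ => (1:ℝ)) ⬝ᵥ P.mulVec (RHS k)
      = -((fun _ => (1:ℝ)) ⬝ᵥ (Rᵀ * B).mulVec (fnum k)) :=
  stmt_12_general p M c hsymm₁ P D hP hD R hR B hB hSBP u fnum RHS hRHS k
end

section
/- Discrete energy rate identity (key step of Theorem 1): under the stated summation-by-parts hypotheses, the semidiscrete right-hand side satisfies Σ_{k=0}^{M} (u_k)ᵀ·P·RHS_k = −Σ_{k=0}^{M} (R·u_k)ᵀ·B·f^num_k + (1/6)·Σ_{i,j,k=0}^{M} c_{ijk}·(R·u_k)ᵀ·B·( (R·u_i)∘(R·u_j) ), so the rate of change of the discrete L² energy (1/2)·Σ_k (u_k)ᵀ·P·u_k is determined solely by boundary terms. -/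
open Matrix

private lemma dotProduct_sum' {ι n : Type*} [Fintype n] (s : Finset ι) (v : n → ℝ)
    (f : ι → n → ℝ) : v ⬝ᵥ (∑ i ∈ s, f i) = ∑ i ∈ s, v ⬝ᵥ f i := by
  simp only [dotProduct, Finset.sum_apply, Finset.mul_sum]
  exact Finset.sum_comm

private lemma mulVec_sum' {ι m n : Type*} [Fintype n] (s : Finset ι) (A : Matrix m n ℝ)
    (f : ι → n → ℝ) : A *ᵥ (∑ i ∈ s, f i) = ∑ i ∈ s, A *ᵥ f i := by
  ext x
  simp only [mulVec, dotProduct, Finset.sum_apply, Finset.mul_sum]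
  exact Finset.sum_comm

private lemma diag_dot' {n : Type*} [Fintype n] [DecidableEq n] (v x w : n → ℝ)
    (A A₂ : Matrix n n ℝ) :
    x ⬝ᵥ (Matrix.diagonal v * A * A₂) *ᵥ w = (v * x) ⬝ᵥ (A * A₂) *ᵥ w := by
  rw [Matrix.mul_assoc, ← mulVec_mulVec]
  simp only [dotProduct, mulVec_diagonal, Pi.mul_apply]
  exact Finset.sum_congr rfl fun a _ => by ring

private lemma transpose_dot' {m n o : Type*} [Fintype m] [Fintype n] [Fintype o]
    (A : Matrix n m ℝ) (C : Matrix n o ℝ) (x : m → ℝ) (w : o → ℝ) :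
    x ⬝ᵥ (Aᵀ * C) *ᵥ w = (A *ᵥ x) ⬝ᵥ (C *ᵥ w) := by
  rw [← mulVec_mulVec, dotProduct_mulVec, vecMul_transpose]

private lemma transpose_dot3' {m n o o' : Type*} [Fintype m] [Fintype n] [Fintype o] [Fintype o']
    (A : Matrix n m ℝ) (C : Matrix n o ℝ) (E : Matrix o o' ℝ) (x : m → ℝ) (w : o' → ℝ) :
    x ⬝ᵥ (Aᵀ * C * E) *ᵥ w = (A *ᵥ x) ⬝ᵥ (C *ᵥ (E *ᵥ w)) := by
  rw [Matrix.mul_assoc, transpose_dot', mulVec_mulVec]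

private lemma diag_symm' {n : Type*} [Fintype n] [DecidableEq n] (v x y : n → ℝ) :
    x ⬝ᵥ Matrix.diagonal v *ᵥ y = y ⬝ᵥ Matrix.diagonal v *ᵥ x := by
  simp only [dotProduct, mulVec_diagonal]
  exact Finset.sum_congr rfl fun a _ => by ring

open Matrix in
/-- Discrete energy rate identity (key step of Theorem 1): under the SBP hypotheses,
`Σ_k u_kᵀ P RHS_k = -Σ_k (R u_k)ᵀ B f^num_k
  + (1/6) Σ_{i,j,k} c_{ijk} (R u_k)ᵀ B ((R u_i)∘(R u_j))`. -/
theorem stmt_13 (p M : ℕ) (c : Fin (M+1) → Fin (M+1) → Fin (M+1) → ℝ)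
    (hsymm₁ : ∀ i j k, c i j k = c j i k)
    (hsymm₂ : ∀ i j k, c i j k = c i k j)
    (P D : Matrix (Fin (p+1)) (Fin (p+1)) ℝ)
    (hP : P.PosDef)
    (hD : D.mulVec (fun _ => 1) = 0)
    (R : Matrix (Fin 2) (Fin (p+1)) ℝ)
    (hR : R.mulVec (fun _ => 1) = fun _ => 1)
    (B : Matrix (Fin 2) (Fin 2) ℝ)
    (hB : B = Matrix.diagonal ![(-1 : ℝ), 1])
    (hSBP : P * D + Dᵀ * P = Rᵀ * B * R)
    (u : Fin (M+1) → Fin (p+1) → ℝ)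
    (fnum : Fin (M+1) → Fin 2 → ℝ)
    (RHS : Fin (M+1) → Fin (p+1) → ℝ)
    (hRHS : ∀ k, RHS k =
      -((1/3 : ℝ) • ∑ i, ∑ j, c i j k •
          (D.mulVec (u i * u j) + (P⁻¹ * Matrix.diagonal (u j) * P * D).mulVec (u i)))
      - (P⁻¹ * Rᵀ * B).mulVec (fnum k - ∑ i, ∑ j, c i j k •
          ((1/3 : ℝ) • R.mulVec (u i * u j)
            + (1/6 : ℝ) • (R.mulVec (u i) * R.mulVec (u j))))) :
    ∑ k, (u k) ⬝ᵥ P.mulVec (RHS k)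
      = -(∑ k, (R.mulVec (u k)) ⬝ᵥ B.mulVec (fnum k))
        + (1/6) * ∑ i, ∑ j, ∑ k, c i j k *
            ((R.mulVec (u k)) ⬝ᵥ B.mulVec (R.mulVec (u i) * R.mulVec (u j))) := by
  have hPinv : P * P⁻¹ = 1 := Matrix.mul_nonsing_inv P (isUnit_iff_ne_zero.mpr hP.det_pos.ne')
  have hBsym : ∀ x y : Fin 2 → ℝ, x ⬝ᵥ B *ᵥ y = y ⬝ᵥ B *ᵥ x := by
    subst hB; exact fun x y => diag_symm' _ x y
  have hPT : Pᵀ = P := by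
    have := hP.1
    rwa [Matrix.IsHermitian, Matrix.conjTranspose_eq_transpose_of_trivial] at this
  -- key cancellation claim
  have claim : ∑ k, ∑ i, ∑ j, c i j k *
        (u k ⬝ᵥ (P * D) *ᵥ (u i * u j) + (u j * u k) ⬝ᵥ (P * D) *ᵥ u i)
      = ∑ k, ∑ i, ∑ j, c i j k *
        ((R *ᵥ u k) ⬝ᵥ (B * R) *ᵥ (u i * u j)) := by
    have csym : ∀ i j k, c i j k = c j k i := fun i j k => by
      rw [hsymm₁, hsymm₂]
    have reindex : (∑ k, ∑ i, ∑ j, c i j k * ((u j * u k) ⬝ᵥ (P * D) *ᵥ u i))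
        = ∑ k, ∑ i, ∑ j, c i j k * ((u i * u j) ⬝ᵥ (P * D) *ᵥ u k) := by
      have step : (∑ k, ∑ i, ∑ j, c i j k * ((u j * u k) ⬝ᵥ (P * D) *ᵥ u i))
          = ∑ k, ∑ i, ∑ j, (fun a b d => c a b d * ((u a * u b) ⬝ᵥ (P * D) *ᵥ u d)) j k i := by
        refine Finset.sum_congr rfl fun k _ => Finset.sum_congr rfl fun i _ =>
          Finset.sum_congr rfl fun j _ => ?_
        show c i j k * ((u j * u k) ⬝ᵥ (P * D) *ᵥ u i)
            = c j k i * ((u j * u k) ⬝ᵥ (P * D) *ᵥ u i)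
        rw [csym i j k]
      rw [step]
      calc (∑ k, ∑ i, ∑ j, (fun a b d => c a b d * ((u a * u b) ⬝ᵥ (P * D) *ᵥ u d)) j k i)
          = ∑ i, ∑ k, ∑ j, (fun a b d => c a b d * ((u a * u b) ⬝ᵥ (P * D) *ᵥ u d)) j k i :=
            Finset.sum_comm
        _ = ∑ i, ∑ j, ∑ k, (fun a b d => c a b d * ((u a * u b) ⬝ᵥ (P * D) *ᵥ u d)) j k i :=
            Finset.sum_congr rfl fun _ _ => Finset.sum_comm
        _ = ∑ k, ∑ i, ∑ j, c i j k * ((u i * u j) ⬝ᵥ (P * D) *ᵥ u k) := rfl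
    have split : ∑ k, ∑ i, ∑ j, c i j k *
          (u k ⬝ᵥ (P * D) *ᵥ (u i * u j) + (u j * u k) ⬝ᵥ (P * D) *ᵥ u i)
        = (∑ k, ∑ i, ∑ j, c i j k * (u k ⬝ᵥ (P * D) *ᵥ (u i * u j)))
          + ∑ k, ∑ i, ∑ j, c i j k * ((u j * u k) ⬝ᵥ (P * D) *ᵥ u i) := by
      simp only [mul_add, Finset.sum_add_distrib]
    rw [split, reindex, ← Finset.sum_add_distrib]
    refine Finset.sum_congr rfl fun k _ => ?_
    rw [← Finset.sum_add_distrib]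
    refine Finset.sum_congr rfl fun i _ => ?_
    rw [← Finset.sum_add_distrib]
    refine Finset.sum_congr rfl fun j _ => ?_
    rw [← mul_add]
    congr 1
    have h1 : u k ⬝ᵥ (P * D) *ᵥ (u i * u j) = (u i * u j) ⬝ᵥ (P * D)ᵀ *ᵥ u k := by
      rw [dotProduct_mulVec, dotProduct_comm, ← mulVec_transpose]
    rw [h1, ← dotProduct_add, ← add_mulVec]
    have h2 : (P * D)ᵀ + P * D = Rᵀ * B * R := by
      rw [transpose_mul, hPT, add_comm (Dᵀ * P) (P * D)]
      exact hSBP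
    rw [h2, transpose_dot3', hBsym, mulVec_mulVec]
  -- expand the left-hand side
  simp only [hRHS, sub_eq_add_neg, mulVec_add, mulVec_neg, mulVec_smul, mulVec_sum',
    mulVec_mulVec, ← Matrix.mul_assoc, hPinv, Matrix.one_mul,
    dotProduct_add, dotProduct_neg, dotProduct_smul, dotProduct_sum', smul_eq_mul,
    diag_dot', transpose_dot', transpose_dot3']
  -- now assemble
  have e1 : ∀ k : Fin (M+1),
      (-(1/3 * ∑ i, ∑ j, c i j k *
          (u k ⬝ᵥ (P * D) *ᵥ (u i * u j) + (u j * u k) ⬝ᵥ (P * D) *ᵥ u i)) +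
        -((R *ᵥ u k) ⬝ᵥ B *ᵥ fnum k +
            -∑ i, ∑ j, c i j k *
              (1/3 * ((R *ᵥ u k) ⬝ᵥ (B * R) *ᵥ (u i * u j)) +
                1/6 * ((R *ᵥ u k) ⬝ᵥ B *ᵥ (R *ᵥ u i * R *ᵥ u j)))))
      = -((R *ᵥ u k) ⬝ᵥ B *ᵥ fnum k)
        + ((∑ i, ∑ j, (1/3 * (c i j k * ((R *ᵥ u k) ⬝ᵥ (B * R) *ᵥ (u i * u j)))
              + 1/6 * (c i j k * ((R *ᵥ u k) ⬝ᵥ B *ᵥ (R *ᵥ u i * R *ᵥ u j)))))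
          - 1/3 * ∑ i, ∑ j, c i j k *
              (u k ⬝ᵥ (P * D) *ᵥ (u i * u j) + (u j * u k) ⬝ᵥ (P * D) *ᵥ u i)) := by
    intro k
    have : ∀ i j, c i j k *
        (1/3 * ((R *ᵥ u k) ⬝ᵥ (B * R) *ᵥ (u i * u j)) +
          1/6 * ((R *ᵥ u k) ⬝ᵥ B *ᵥ (R *ᵥ u i * R *ᵥ u j)))
        = 1/3 * (c i j k * ((R *ᵥ u k) ⬝ᵥ (B * R) *ᵥ (u i * u j)))
          + 1/6 * (c i j k * ((R *ᵥ u k) ⬝ᵥ B *ᵥ (R *ᵥ u i * R *ᵥ u j))) := fun i j => by ring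
    simp only [this]
    ring
  simp only [e1]
  rw [Finset.sum_add_distrib, ← Finset.sum_neg_distrib]
  congr 1
  rw [Finset.sum_sub_distrib, ← Finset.mul_sum, claim]
  simp only [Finset.sum_add_distrib, ← Finset.mul_sum]
  have comm3 : (∑ k, ∑ i, ∑ j, c i j k * ((R *ᵥ u k) ⬝ᵥ B *ᵥ (R *ᵥ u i * R *ᵥ u j)))
      = ∑ i, ∑ j, ∑ k, c i j k * ((R *ᵥ u k) ⬝ᵥ B *ᵥ (R *ᵥ u i * R *ᵥ u j)) := by
    rw [Finset.sum_comm]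
    exact Finset.sum_congr rfl fun _ _ => Finset.sum_comm
  rw [comm3]
  ring
end

section
/- For every integer i ≥ 2 and all a, b ∈ ℝ, the first-moment Gaussian integral of the i-th normalised stochastic Hermite polynomial satisfies ∫_{a}^{b} ξ·φ_i(ξ)·ω(ξ) dξ = −(1/√i)·( ξ·φ_{i−1}(ξ)·ω(ξ) + (1/√(i−1))·φ_{i−2}(ξ)·ω(ξ) ) evaluated from ξ = a to ξ = b, i.e. it equals −(1/√i)·[ b·φ_{i−1}(b)·ω(b) − a·φ_{i−1}(a)·ω(a) + (1/√(i−1))·( φ_{i−2}(b)·ω(b) − φ_{i−2}(a)·ω(a) ) ]. -/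
/-!
Differentiating the three-term recurrence gives `He'_{n+1} = (n+1) He_n`, hence the Rodrigues-type
rule `(He_m ω)' = (He_m' - ξ He_m) ω = -He_{m+1} ω`. Since `ξ He_{n+2} = He_{n+3} + (n+2) He_{n+1}`,
the integrand `ξ He_{n+2} ω` has the primitive `-(He_{n+2} + (n+2) He_n) ω = -(ξ He_{n+1} + He_n) ω`;
the normalisations are matched by `√((n+2)!) = √(n+2) √(n+1) √(n!)`.
-/

open Real intervalIntegral

section HermiteRecurrence

variable {He : ℕ → ℝ → ℝ} (hHe0 : ∀ ξ, He 0 ξ = 1) (hHe1 : ∀ ξ, He 1 ξ = ξ)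
  (hHerec : ∀ n ξ, He (n + 2) ξ = ξ * He (n + 1) ξ - (n + 1) * He n ξ)
include hHe0 hHe1 hHerec

theorem hasDerivAt_hermite_succ (n : ℕ) (ξ : ℝ) :
    HasDerivAt (He (n + 1)) ((n + 1) * He n ξ) ξ := by
  induction n using Nat.twoStepInduction with
  | zero =>
    rw [show He 1 = id from funext hHe1]
    simpa [hHe0] using hasDerivAt_id ξ
  | one =>
    have hd : HasDerivAt (fun x => x * x - 1) (1 * ξ + ξ * 1) ξ :=
      ((hasDerivAt_id' ξ).mul (hasDerivAt_id' ξ)).sub_const 1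
    rw [show He 2 = fun x => x * x - 1 from funext fun x => by simp [hHerec 0, hHe1, hHe0]]
    refine hd.congr_deriv ?_
    rw [hHe1]
    ring
  | more n ih₀ ih₁ =>
    have hd : HasDerivAt (fun x => x * He (n + 2) x - ((n : ℝ) + 2) * He (n + 1) x)
        (1 * He (n + 2) ξ + ξ * ((↑(n + 1) + 1) * He (n + 1) ξ)
          - ((n : ℝ) + 2) * ((↑n + 1) * He n ξ)) ξ :=
      ((hasDerivAt_id' ξ).mul ih₁).sub (ih₀.const_mul _)
    rw [show He (n + 3) = fun x => x * He (n + 2) x - ((n : ℝ) + 2) * He (n + 1) x from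
      funext fun x => (hHerec (n + 1) x).trans (by push_cast; ring)]
    refine hd.congr_deriv ?_
    push_cast
    linear_combination -((n : ℝ) + 2) * hHerec n ξ

theorem hasDerivAt_hermite_mul_weight {g : ℝ → ℝ} (hg : ∀ x, HasDerivAt g (-x * g x) x)
    (m : ℕ) (ξ : ℝ) : HasDerivAt (fun x => He m x * g x) (-(He (m + 1) ξ * g ξ)) ξ := by
  cases m with
  | zero => simpa [hHe0, hHe1] using hg ξ
  | succ m =>
    refine ((hasDerivAt_hermite_succ hHe0 hHe1 hHerec m ξ).mul (hg ξ)).congr_deriv ?_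
    rw [hHerec]
    ring

theorem hasDerivAt_hermite_first_moment_primitive {g : ℝ → ℝ}
    (hg : ∀ x, HasDerivAt g (-x * g x) x) (n : ℕ) (ξ : ℝ) :
    HasDerivAt (fun x => -((x * He (n + 1) x + He n x) * g x)) (ξ * He (n + 2) ξ * g ξ) ξ := by
  have hd := ((hasDerivAt_hermite_mul_weight hHe0 hHe1 hHerec hg (n + 2) ξ).add
    ((hasDerivAt_hermite_mul_weight hHe0 hHe1 hHerec hg n ξ).const_mul ((n : ℝ) + 2))).neg
  rw [show (fun x => -((x * He (n + 1) x + He n x) * g x))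
      = fun x => -(He (n + 2) x * g x + ((n : ℝ) + 2) * (He n x * g x)) from
    funext fun x => by rw [hHerec]; ring]
  refine hd.congr_deriv ?_
  rw [hHerec (n + 1)]
  push_cast
  ring

theorem integral_mul_hermite_mul_weight {g : ℝ → ℝ} (hg : ∀ x, HasDerivAt g (-x * g x) x)
    (n : ℕ) (a b : ℝ) :
    ∫ x in a..b, x * He (n + 2) x * g x
      = (a * He (n + 1) a + He n a) * g a - (b * He (n + 1) b + He n b) * g b := by
  have hHe_cont : Continuous (He (n + 2)) := continuous_iff_continuousAt.2 fun x =>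
    (hasDerivAt_hermite_succ hHe0 hHe1 hHerec (n + 1) x).continuousAt
  have hg_cont : Continuous g := continuous_iff_continuousAt.2 fun x => (hg x).continuousAt
  rw [integral_eq_sub_of_hasDerivAt
    (fun x _ => hasDerivAt_hermite_first_moment_primitive hHe0 hHe1 hHerec hg n x)
    ((by fun_prop : Continuous fun x => x * He (n + 2) x * g x).intervalIntegrable _ _)]
  ring

end HermiteRecurrence

theorem hasDerivAt_exp_neg_sq_div_two_div (c ξ : ℝ) :
    HasDerivAt (fun x => exp (-x ^ 2 / 2) / c) (-ξ * (exp (-ξ ^ 2 / 2) / c)) ξ := by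
  have h : HasDerivAt (fun x : ℝ => -x ^ 2 / 2) (-(2 * ξ) / 2) ξ := by
    simpa using ((hasDerivAt_pow 2 ξ).neg).div_const 2
  exact (h.exp.div_const c).congr_deriv (by ring)

theorem sqrt_factorial_succ (n : ℕ) :
    √((n + 1).factorial : ℝ) = √((n : ℝ) + 1) * √(n.factorial : ℝ) := by
  rw [Nat.factorial_succ, Nat.cast_mul, sqrt_mul (by positivity)]
  push_cast
  rfl

open intervalIntegral in
/-- First-moment Gaussian integral of the `i`-th normalised probabilists' Hermite
polynomial for `i ≥ 2`. -/
theorem stmt_16 (He : ℕ → ℝ → ℝ)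
    (hHe0 : ∀ ξ, He 0 ξ = 1)
    (hHe1 : ∀ ξ, He 1 ξ = ξ)
    (hHerec : ∀ n ξ, He (n+2) ξ = ξ * He (n+1) ξ - (n+1) * He n ξ)
    (φ : ℕ → ℝ → ℝ)
    (hφ : ∀ i ξ, φ i ξ = He i ξ / Real.sqrt (Nat.factorial i))
    (ω : ℝ → ℝ)
    (hω : ∀ ξ, ω ξ = Real.exp (-ξ^2 / 2) / Real.sqrt (2 * Real.pi))
    (i : ℕ) (hi : 2 ≤ i) (a b : ℝ) :
    ∫ ξ in a..b, ξ * φ i ξ * ω ξ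
      = -(1 / Real.sqrt i) * (b * φ (i-1) b * ω b - a * φ (i-1) a * ω a
          + (1 / Real.sqrt (i-1)) * (φ (i-2) b * ω b - φ (i-2) a * ω a)) := by
  obtain ⟨n, rfl⟩ : ∃ n, i = n + 2 := ⟨i - 2, by omega⟩
  have hω' : ∀ x, HasDerivAt ω (-x * ω x) x := by
    rw [funext hω]
    exact hasDerivAt_exp_neg_sq_div_two_div _
  simp only [hφ, show n + 2 - 1 = n + 1 from rfl, Nat.add_sub_cancel, mul_div_assoc',
    div_mul_eq_mul_div, integral_div, integral_mul_hermite_mul_weight hHe0 hHe1 hHerec hω',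
    sqrt_factorial_succ]
  rw [show ((n + 2 : ℕ) : ℝ) = n + 1 + 1 by push_cast; ring, add_sub_cancel_right]
  push_cast
  have : (0 : ℝ) < √((n : ℝ) + 1 + 1) := by positivity
  have : (0 : ℝ) < √((n : ℝ) + 1) := by positivity
  have : (0 : ℝ) < √(n.factorial : ℝ) := by positivity
  field_simp
  ring
end

section
/- Polynomial chaos coefficients of the uncertain shock: let a, b, ξ_s ∈ ℝ and let u : ℝ → ℝ be defined by u(ξ) = a + b·ξ for ξ > ξ_s and u(ξ) = −a + b·ξ for ξ ≤ ξ_s. Then for every integer i ≥ 1, the i-th polynomial chaos coefficient of u satisfies ∫_{ℝ} u(ξ)·φ_i(ξ)·ω(ξ) dξ = b·δ_{i,1} + a·(√2/√(π·i))·φ_{i−1}(ξ_s)·exp(−ξ_s²/2), where δ_{i,1} is the Kronecker delta. -/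
/-!
Put `G n x = He_n(x) e^{-x²/2}`. Since `He_{n+1}' = (n+1) He_n`, the three-term recurrence reads
`He_{n+1} = x He_n - He_n'`, which says `G n' = -G (n+1)`; hence `∫_s^∞ G (n+1) = G n s` and
`∫_ℝ G (n+1) = 0`, while `x G (n+1) = G (n+2) + (n+1) G n`. Writing the shock as
`u(ξ) = b ξ - a + 2a·1_{ξ > ξs}` gives `∫ u G (n+1) = 2a G n ξs + b δ_{n,0} √(2π)`, and dividing by
the normalisations `√((n+1)!)` and `√(2π)` gives the coefficient.
-/

open Polynomial Real MeasureTheory Filter Set Topology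

namespace Polynomial

theorem derivative_hermite_succ (n : ℕ) :
    derivative (hermite (n + 1)) = (n + 1 : ℤ[X]) * hermite n := by
  induction n with
  | zero => simp
  | succ n ih =>
    rw [hermite_succ (n + 1), derivative_sub, derivative_mul, derivative_X, ih, derivative_mul,
      hermite_succ n]
    simp only [derivative_add, derivative_natCast, derivative_one, Nat.cast_succ]
    ring

theorem hermite_succ_succ (n : ℕ) :
    hermite (n + 2) = X * hermite (n + 1) - (n + 1 : ℤ[X]) * hermite n := by
  rw [hermite_succ (n + 1), derivative_hermite_succ]

theorem integrable_eval_mul_exp_neg_mul_sq (p : ℝ[X]) {b : ℝ} (hb : 0 < b) :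
    Integrable fun x => p.eval x * exp (-b * x ^ 2) := by
  induction p using Polynomial.induction_on' with
  | add p q hp hq =>
    simp only [eval_add, add_mul]
    exact hp.add hq
  | monomial n c =>
    have h := integrable_rpow_mul_exp_neg_mul_sq hb (s := n)
      (by linarith [n.cast_nonneg (α := ℝ)])
    simp only [rpow_natCast] at h
    simpa only [eval_monomial, mul_assoc] using h.const_mul c

theorem tendsto_eval_mul_exp_neg_mul_sq_atTop (p : ℝ[X]) {b : ℝ} (hb : 0 < b) :
    Tendsto (fun x => p.eval x * exp (-b * x ^ 2)) atTop (𝓝 0) := by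
  have hexp : Tendsto (fun x => exp (x - b * x ^ 2)) atTop (𝓝 0) := by
    refine tendsto_exp_atBot.comp (tendsto_atBot_mono' _ ?_ tendsto_neg_atTop_atBot)
    filter_upwards [eventually_ge_atTop (2 / b)] with x hx
    have : 2 ≤ b * x := by rwa [div_le_iff₀' hb] at hx
    nlinarith
  refine (zero_mul (0 : ℝ) ▸ p.tendsto_div_exp_atTop.mul hexp).congr fun x => ?_
  rw [div_mul_eq_mul_div, mul_div_assoc, ← exp_sub]
  ring_nf

theorem tendsto_eval_mul_exp_neg_mul_sq_atBot (p : ℝ[X]) {b : ℝ} (hb : 0 < b) :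
    Tendsto (fun x => p.eval x * exp (-b * x ^ 2)) atBot (𝓝 0) := by
  simpa [Function.comp_def] using
    ((p.comp (-X)).tendsto_eval_mul_exp_neg_mul_sq_atTop hb).comp tendsto_neg_atBot_atTop

end Polynomial

theorem eq_aeval_hermite_of_recurrence {R : Type*} [CommRing R] {He : ℕ → R → R}
    (h0 : ∀ x, He 0 x = 1) (h1 : ∀ x, He 1 x = x)
    (hrec : ∀ n x, He (n + 2) x = x * He (n + 1) x - (n + 1) * He n x) (x : R) :
    ∀ n, He n x = aeval x (hermite n)
  | 0 => by simp [h0]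
  | 1 => by simp [h1]
  | n + 2 => by
    rw [hrec, eq_aeval_hermite_of_recurrence h0 h1 hrec x (n + 1),
      eq_aeval_hermite_of_recurrence h0 h1 hrec x n, hermite_succ_succ]
    simp

noncomputable def hermiteGauss (n : ℕ) (x : ℝ) : ℝ := aeval x (hermite n) * exp (-x ^ 2 / 2)

noncomputable def shockProfile (a b s x : ℝ) : ℝ := if s < x then a + b * x else -a + b * x

namespace hermiteGauss

theorem eq_eval_mul_exp (n : ℕ) : hermiteGauss n =
    fun x => (map (algebraMap ℤ ℝ) (hermite n)).eval x * exp (-(1 / 2) * x ^ 2) := by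
  ext x
  rw [hermiteGauss, eval_map_algebraMap]
  ring_nf

theorem integrable (n : ℕ) : Integrable (hermiteGauss n) :=
  eq_eval_mul_exp n ▸ integrable_eval_mul_exp_neg_mul_sq _ one_half_pos

theorem tendsto_atTop (n : ℕ) : Tendsto (hermiteGauss n) atTop (𝓝 0) :=
  eq_eval_mul_exp n ▸ tendsto_eval_mul_exp_neg_mul_sq_atTop _ one_half_pos

theorem tendsto_atBot (n : ℕ) : Tendsto (hermiteGauss n) atBot (𝓝 0) :=
  eq_eval_mul_exp n ▸ tendsto_eval_mul_exp_neg_mul_sq_atBot _ one_half_pos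

theorem hasDerivAt (n : ℕ) (x : ℝ) :
    HasDerivAt (hermiteGauss n) (-hermiteGauss (n + 1) x) x := by
  have hexp : HasDerivAt (fun y : ℝ => exp (-y ^ 2 / 2)) (-x * exp (-x ^ 2 / 2)) x := by
    convert ((hasDerivAt_pow 2 x).fun_neg.div_const 2).exp using 1
    ring
  refine (((hermite n).hasDerivAt_aeval x).fun_mul hexp).congr_deriv ?_
  simp only [hermiteGauss, hermite_succ, map_sub, map_mul, aeval_X]
  ring

theorem hasDerivAt_neg (n : ℕ) (x : ℝ) :
    HasDerivAt (fun y => -hermiteGauss n y) (hermiteGauss (n + 1) x) x :=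
  neg_neg (hermiteGauss (n + 1) x) ▸ (hasDerivAt n x).fun_neg

theorem x_mul_succ (n : ℕ) (x : ℝ) :
    x * hermiteGauss (n + 1) x = hermiteGauss (n + 2) x + (n + 1) * hermiteGauss n x := by
  simp only [hermiteGauss, hermite_succ_succ, map_sub, map_mul, map_add, map_natCast, map_one,
    aeval_X]
  ring

theorem integral_Ioi_succ (n : ℕ) (s : ℝ) :
    ∫ x in Ioi s, hermiteGauss (n + 1) x = hermiteGauss n s := by
  simpa using integral_Ioi_of_hasDerivAt_of_tendsto' (fun x _ => hasDerivAt_neg n x)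
    (integrable (n + 1)).integrableOn (tendsto_atTop n).neg

theorem integral_succ (n : ℕ) : ∫ x, hermiteGauss (n + 1) x = 0 := by
  simpa using integral_of_hasDerivAt_of_tendsto (hasDerivAt_neg n) (integrable (n + 1))
    (tendsto_atBot n).neg (tendsto_atTop n).neg

theorem integral_zero : ∫ x, hermiteGauss 0 x = √(2 * π) := by
  simp only [eq_eval_mul_exp, hermite_zero, C_1, Polynomial.map_one, eval_one, one_mul,
    integral_gaussian]
  ring_nf

theorem integrable_x_mul_succ (n : ℕ) : Integrable fun x => x * hermiteGauss (n + 1) x := by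
  simp_rw [x_mul_succ]
  exact (integrable _).add ((integrable n).const_mul _)

theorem integral_x_mul_succ (n : ℕ) :
    ∫ x, x * hermiteGauss (n + 1) x = if n = 0 then √(2 * π) else 0 := by
  simp_rw [x_mul_succ]
  rw [integral_add (integrable _) ((integrable n).const_mul _), integral_succ, integral_const_mul]
  rcases n with _ | n
  · simp [integral_zero]
  · simp [integral_succ]

theorem integral_shockProfile_mul_succ (a b s : ℝ) (n : ℕ) :
    ∫ x, shockProfile a b s x * hermiteGauss (n + 1) x
      = 2 * a * hermiteGauss n s + b * if n = 0 then √(2 * π) else 0 := by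
  have hsplit : ∀ x, shockProfile a b s x * hermiteGauss (n + 1) x
      = b * (x * hermiteGauss (n + 1) x) - a * hermiteGauss (n + 1) x
        + 2 * a * (Ioi s).indicator (hermiteGauss (n + 1)) x := by
    intro x
    by_cases h : s < x <;> simp only [shockProfile, h, ↓reduceIte, mem_Ioi,
      not_false_eq_true, indicator_of_mem, indicator_of_notMem, mul_zero, add_zero] <;> ring
  have hlin := (integrable_x_mul_succ n).const_mul b
  have hconst := (integrable (n + 1)).const_mul a
  have hjump := ((integrable (n + 1)).indicator (measurableSet_Ioi (a := s))).const_mul (2 * a)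
  simp_rw [hsplit]
  rw [integral_add (by exact hlin.sub hconst) hjump, integral_sub hlin hconst, integral_const_mul,
    integral_const_mul, integral_const_mul, integral_indicator measurableSet_Ioi,
    integral_Ioi_succ, integral_succ, integral_x_mul_succ]
  ring

end hermiteGauss

theorem two_div_sqrt_factorial_succ_mul_sqrt_two_pi (n : ℕ) :
    2 / (√((n + 1).factorial : ℝ) * √(2 * π)) = √2 / √(π * (n + 1)) / √(n.factorial : ℝ) := by
  have hfact : √((n + 1).factorial : ℝ) = √(n + 1) * √(n.factorial : ℝ) := by
    rw [Nat.factorial_succ, Nat.cast_mul, Nat.cast_succ, sqrt_mul (by positivity)]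
  have : 0 < √((n : ℝ) + 1) := by positivity
  rw [hfact, sqrt_mul zero_le_two, sqrt_mul pi_pos.le]
  field_simp
  rw [sq_sqrt zero_le_two]

open MeasureTheory in
/-- Polynomial chaos coefficients of the uncertain shock: for `i ≥ 1`,
`∫_ℝ u(ξ) φ_i(ξ) ω(ξ) dξ = b δ_{i,1} + a (√2/√(πi)) φ_{i-1}(ξ_s) exp(-ξ_s²/2)`. -/
theorem stmt_17 (He : ℕ → ℝ → ℝ)
    (hHe0 : ∀ ξ, He 0 ξ = 1)
    (hHe1 : ∀ ξ, He 1 ξ = ξ)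
    (hHerec : ∀ n ξ, He (n+2) ξ = ξ * He (n+1) ξ - (n+1) * He n ξ)
    (φ : ℕ → ℝ → ℝ)
    (hφ : ∀ i ξ, φ i ξ = He i ξ / Real.sqrt (Nat.factorial i))
    (ω : ℝ → ℝ)
    (hω : ∀ ξ, ω ξ = Real.exp (-ξ^2 / 2) / Real.sqrt (2 * Real.pi))
    (a b ξs : ℝ) (u : ℝ → ℝ)
    (hu : ∀ ξ, u ξ = if ξs < ξ then a + b * ξ else -a + b * ξ)
    (i : ℕ) (hi : 1 ≤ i) :
    ∫ ξ, u ξ * φ i ξ * ω ξ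
      = b * (if i = 1 then 1 else 0)
        + a * (Real.sqrt 2 / Real.sqrt (Real.pi * i)) * φ (i-1) ξs
          * Real.exp (-ξs^2 / 2) := by
  obtain ⟨n, rfl⟩ : ∃ n, i = n + 1 := ⟨i - 1, by omega⟩
  obtain rfl : u = shockProfile a b ξs := funext hu
  have hHe := eq_aeval_hermite_of_recurrence hHe0 hHe1 hHerec
  have hintegrand : ∀ ξ, shockProfile a b ξs ξ * φ (n + 1) ξ * ω ξ = (√((n + 1).factorial : ℝ)
      * √(2 * π))⁻¹ * (shockProfile a b ξs ξ * hermiteGauss (n + 1) ξ) := by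
    intro ξ
    rw [hφ, hω, hHe, hermiteGauss]
    field_simp
  simp_rw [hintegrand]
  rw [integral_const_mul, hermiteGauss.integral_shockProfile_mul_succ, hφ, hHe, Nat.add_sub_cancel,
    hermiteGauss, mul_add, add_comm]
  congr 1
  · rcases n with _ | n
    · have : 0 < √π := sqrt_pos.2 pi_pos
      simp only [zero_add, Nat.factorial_one, Nat.cast_one, sqrt_one, sqrt_mul zero_le_two π,
        one_mul, mul_inv_rev, ↓reduceIte, mul_one]
      field_simp
    · simp
  · push_cast
    linear_combination (a * aeval ξs (hermite n) * exp (-ξs ^ 2 / 2)) *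
      two_div_sqrt_factorial_succ_mul_sqrt_two_pi n
end

section
/- Incomplete integral of Jacobi polynomials via the Rodrigues recursion: let α, β > −1 be real, let w^{(α,β)}(ξ) = (1−ξ)^α·(1+ξ)^β for ξ ∈ (−1,1), and define the Jacobi polynomials through Rodrigues' formula, P_i^{(α,β)}(ξ) = ( (−2)^i · i! · w^{(α,β)}(ξ) )^{−1} · (d^i/dξ^i)[ (1−ξ)^{α+i}·(1+ξ)^{β+i} ]. Then for every integer i ≥ 1 and every x ∈ (−1,1), ∫_{−1}^{x} P_i^{(α,β)}(ξ)·w^{(α,β)}(ξ) dξ = −(1/(2·i))·P_{i−1}^{(α+1,β+1)}(x)·w^{(α+1,β+1)}(x). -/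
/-!
Put `F = (1 - t)^(α + i) (1 + t)^(β + i)`. By Rodrigues' formula the integrand is `c_i F^(i)` and
the right-hand side is `c_(i-1) F^(i-1)(x)`, where `c_i = ((-2)^i i!)⁻¹ = -c_(i-1) / (2i)`; so the
claim is the fundamental theorem of calculus for `F^(i-1)` on `[-1, x]`. Its hypotheses come from
the shape of the derivatives: on `(-1, 1)` the `n`-th derivative of `(1 - t)^p (1 + t)^q` is a
linear combination of functions `(1 - t)^a (1 + t)^b` with `b ≥ q - n`. For `n = i - 1` all these
exponents `b` are at least `β + 1 > 0`, so `F^(i-1)` extends continuously by `0` to `-1`, while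
those of `F^(i)` exceed `-1`, which makes it integrable near `-1`.
-/

open Set MeasureTheory

noncomputable def jacobiWeight (p q t : ℝ) : ℝ := (1 - t) ^ p * (1 + t) ^ q

def jacobiWeightSpan (b₀ : ℝ) : Submodule ℝ (ℝ → ℝ) :=
  Submodule.span ℝ (image2 jacobiWeight univ (Ici b₀))

theorem jacobiWeight_pos {t : ℝ} (ht : t ∈ Ioo (-1) 1) (p q : ℝ) : 0 < jacobiWeight p q t :=
  mul_pos (Real.rpow_pos_of_pos (by linarith [ht.2]) p)
    (Real.rpow_pos_of_pos (by linarith [ht.1]) q)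

theorem hasDerivAt_jacobiWeight {t : ℝ} (ht : t ∈ Ioo (-1) 1) (p q : ℝ) :
    HasDerivAt (jacobiWeight p q)
      (-p * jacobiWeight (p - 1) q t + q * jacobiWeight p (q - 1) t) t := by
  have h₁ := ((hasDerivAt_id' t).const_sub 1).rpow_const (p := p) (Or.inl (by linarith [ht.2]))
  have h₂ := ((hasDerivAt_id' t).const_add 1).rpow_const (p := q) (Or.inl (by linarith [ht.1]))
  exact (h₁.fun_mul h₂).congr_deriv (by simp only [jacobiWeight]; ring)

theorem continuousOn_jacobiWeight (p : ℝ) {q : ℝ} (hq : 0 ≤ q) :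
    ContinuousOn (jacobiWeight p q) (Iio 1) := by
  refine ContinuousOn.mul ?_ ?_
  · exact (continuousOn_const.sub continuousOn_id).rpow_const
      fun t ht => Or.inl (sub_ne_zero.mpr (ne_of_gt ht))
  · exact (continuousOn_const.add continuousOn_id).rpow_const fun _ _ => Or.inr hq

theorem intervalIntegrable_jacobiWeight (p : ℝ) {q : ℝ} (hq : -1 < q) {x : ℝ} (hx : x < 1) :
    IntervalIntegrable (jacobiWeight p q) volume (-1) x := by
  have h₁ : IntervalIntegrable (fun t : ℝ => (1 + t) ^ q) volume (-1) x := by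
    simpa [add_comm] using
      (intervalIntegral.intervalIntegrable_rpow' (a := 0) (b := x + 1) hq).comp_add_right 1
  have h₂ : ContinuousOn (fun t : ℝ => (1 - t) ^ p) (uIcc (-1) x) :=
    (continuousOn_const.sub continuousOn_id).rpow_const fun t ht =>
      Or.inl (sub_ne_zero.mpr (ne_of_gt (ht.2.trans_lt (max_lt (by norm_num) hx))))
  exact (h₁.mul_continuousOn h₂).congr fun t _ => mul_comm _ _

theorem jacobiWeight_mem_jacobiWeightSpan (p : ℝ) {q b₀ : ℝ} (hq : b₀ ≤ q) :
    jacobiWeight p q ∈ jacobiWeightSpan b₀ :=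
  Submodule.subset_span (mem_image2_of_mem (mem_univ p) hq)

theorem exists_hasDerivAt_of_mem_jacobiWeightSpan {b₀ : ℝ} {f : ℝ → ℝ}
    (hf : f ∈ jacobiWeightSpan b₀) :
    ∃ f' ∈ jacobiWeightSpan (b₀ - 1), ∀ t ∈ Ioo (-1) 1, HasDerivAt f (f' t) t := by
  induction hf using Submodule.span_induction with
  | mem g hg =>
    obtain ⟨p, -, q, hq : b₀ ≤ q, rfl⟩ := hg
    refine ⟨-p • jacobiWeight (p - 1) q + q • jacobiWeight p (q - 1), ?_,
      fun t ht => hasDerivAt_jacobiWeight ht p q⟩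
    exact add_mem (Submodule.smul_mem _ _ (jacobiWeight_mem_jacobiWeightSpan _ (by linarith)))
      (Submodule.smul_mem _ _ (jacobiWeight_mem_jacobiWeightSpan _ (by linarith)))
  | zero => exact ⟨0, zero_mem _, fun t _ => hasDerivAt_const t 0⟩
  | add g h _ _ hg hh =>
    obtain ⟨g', hg', hgd⟩ := hg
    obtain ⟨h', hh', hhd⟩ := hh
    exact ⟨g' + h', add_mem hg' hh', fun t ht => (hgd t ht).add (hhd t ht)⟩
  | smul a g _ hg =>
    obtain ⟨g', hg', hgd⟩ := hg
    exact ⟨a • g', Submodule.smul_mem _ a hg', fun t ht => (hgd t ht).const_smul a⟩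

theorem continuousOn_of_mem_jacobiWeightSpan {b₀ : ℝ} (hb₀ : 0 ≤ b₀) {f : ℝ → ℝ}
    (hf : f ∈ jacobiWeightSpan b₀) : ContinuousOn f (Iio 1) := by
  induction hf using Submodule.span_induction with
  | mem g hg =>
    obtain ⟨p, -, q, hq : b₀ ≤ q, rfl⟩ := hg
    exact continuousOn_jacobiWeight p (hb₀.trans hq)
  | zero => exact continuousOn_const
  | add g h _ _ hg hh => exact hg.add hh
  | smul a g _ hg => exact hg.const_smul a

theorem apply_neg_one_of_mem_jacobiWeightSpan {b₀ : ℝ} (hb₀ : 0 < b₀) {f : ℝ → ℝ}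
    (hf : f ∈ jacobiWeightSpan b₀) : f (-1) = 0 := by
  induction hf using Submodule.span_induction with
  | mem g hg =>
    obtain ⟨p, -, q, hq : b₀ ≤ q, rfl⟩ := hg
    simp [jacobiWeight, Real.zero_rpow (hb₀.trans_le hq).ne']
  | zero => rfl
  | add g h _ _ hg hh => simp [hg, hh]
  | smul a g _ hg => simp [hg]

theorem intervalIntegrable_of_mem_jacobiWeightSpan {b₀ : ℝ} (hb₀ : -1 < b₀) {f : ℝ → ℝ}
    (hf : f ∈ jacobiWeightSpan b₀) {x : ℝ} (hx : x < 1) :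
    IntervalIntegrable f volume (-1) x := by
  induction hf using Submodule.span_induction with
  | mem g hg =>
    obtain ⟨p, -, q, hq : b₀ ≤ q, rfl⟩ := hg
    exact intervalIntegrable_jacobiWeight p (hb₀.trans_le hq) hx
  | zero => exact intervalIntegrable_const
  | add g h _ _ hg hh => exact hg.add hh
  | smul a g _ hg => exact hg.const_mul a

theorem integral_eq_of_mem_jacobiWeightSpan {b₀ : ℝ} (hb₀ : 0 < b₀) {f f' : ℝ → ℝ}
    (hf : f ∈ jacobiWeightSpan b₀) (hf' : f' ∈ jacobiWeightSpan (b₀ - 1))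
    (hderiv : ∀ t ∈ Ioo (-1) 1, HasDerivAt f (f' t) t) {x : ℝ} (hx : x ∈ Ioo (-1) 1) :
    ∫ t in (-1)..x, f' t = f x := by
  rw [intervalIntegral.integral_eq_sub_of_hasDerivAt_of_le hx.1.le
    ((continuousOn_of_mem_jacobiWeightSpan hb₀.le hf).mono fun t ht => ht.2.trans_lt hx.2)
    (fun t ht => hderiv t ⟨ht.1, ht.2.trans hx.2⟩)
    (intervalIntegrable_of_mem_jacobiWeightSpan (by linarith) hf' hx.2),
    apply_neg_one_of_mem_jacobiWeightSpan hb₀ hf, sub_zero]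

theorem iteratedDeriv_succ_eqOn {g f f' : ℝ → ℝ} {n : ℕ} {U : Set ℝ} (hU : IsOpen U)
    (hg : EqOn (iteratedDeriv n g) f U) (hf : ∀ t ∈ U, HasDerivAt f (f' t) t) :
    EqOn (iteratedDeriv (n + 1) g) f' U := fun t ht => by
  rw [iteratedDeriv_succ, (Filter.eventuallyEq_of_mem (hU.mem_nhds ht) hg).deriv_eq,
    (hf t ht).deriv]

theorem exists_eqOn_iteratedDeriv_jacobiWeight (p q : ℝ) (n : ℕ) :
    ∃ f ∈ jacobiWeightSpan (q - n),
      EqOn (iteratedDeriv n (jacobiWeight p q)) f (Ioo (-1) 1) := by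
  induction n with
  | zero =>
    exact ⟨jacobiWeight p q, jacobiWeight_mem_jacobiWeightSpan p (by simp), fun _ _ => rfl⟩
  | succ n ih =>
    obtain ⟨f, hf, hfeq⟩ := ih
    obtain ⟨f', hf', hderiv⟩ := exists_hasDerivAt_of_mem_jacobiWeightSpan hf
    exact ⟨f', by rwa [Nat.cast_succ, ← sub_sub],
      iteratedDeriv_succ_eqOn isOpen_Ioo hfeq hderiv⟩

theorem integral_iteratedDeriv_succ_jacobiWeight (p : ℝ) {q : ℝ} {m : ℕ} (hq : (m : ℝ) < q)
    {x : ℝ} (hx : x ∈ Ioo (-1) 1) :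
    ∫ t in (-1)..x, iteratedDeriv (m + 1) (jacobiWeight p q) t
      = iteratedDeriv m (jacobiWeight p q) x := by
  obtain ⟨f, hf, hfeq⟩ := exists_eqOn_iteratedDeriv_jacobiWeight p q m
  obtain ⟨f', hf', hderiv⟩ := exists_hasDerivAt_of_mem_jacobiWeightSpan hf
  have hf'eq := iteratedDeriv_succ_eqOn isOpen_Ioo hfeq hderiv
  rw [intervalIntegral.integral_congr_Ioo_of_le hx.1.le
      (hf'eq.mono (Ioo_subset_Ioo_right hx.2.le)),
    integral_eq_of_mem_jacobiWeightSpan (sub_pos.mpr hq) hf hf' hderiv hx, hfeq hx]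

open intervalIntegral in
theorem stmt_19_general (α β : ℝ) (hβ : -1 < β)
    (w : ℝ → ℝ → ℝ → ℝ)
    (hw : ∀ a b ξ, w a b ξ = (1 - ξ) ^ a * (1 + ξ) ^ b)
    (Jac : ℕ → ℝ → ℝ → ℝ → ℝ)
    (hJac : ∀ (i : ℕ) (a b : ℝ), ∀ ξ ∈ Set.Ioo (-1 : ℝ) 1,
      Jac i a b ξ = (((-2 : ℝ)^i * (Nat.factorial i : ℝ)) * w a b ξ)⁻¹ *
        iteratedDeriv i (fun t => (1 - t) ^ (a + (i : ℝ)) * (1 + t) ^ (b + (i : ℝ))) ξ)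
    (i : ℕ) (hi : 1 ≤ i) (x : ℝ) (hx : x ∈ Set.Ioo (-1 : ℝ) 1) :
    ∫ ξ in (-1 : ℝ)..x, Jac i α β ξ * w α β ξ
      = -(1 / (2 * i)) * Jac (i-1) (α+1) (β+1) x * w (α+1) (β+1) x := by
  have hRodrigues : ∀ (n : ℕ) (a b : ℝ), ∀ ξ ∈ Ioo (-1 : ℝ) 1, Jac n a b ξ * w a b ξ
      = ((-2 : ℝ) ^ n * n.factorial)⁻¹
        * iteratedDeriv n (jacobiWeight (a + n) (b + n)) ξ := by
    intro n a b ξ hξ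
    have hw₀ : w a b ξ ≠ 0 := by rw [hw]; exact (jacobiWeight_pos hξ a b).ne'
    rw [hJac n a b ξ hξ, mul_inv, mul_right_comm, inv_mul_cancel_right₀ hw₀]
    rfl
  obtain ⟨m, rfl⟩ : ∃ m, i = m + 1 := ⟨i - 1, by omega⟩
  have hshift : jacobiWeight (α + 1 + m) (β + 1 + m)
      = jacobiWeight (α + ↑(m + 1)) (β + ↑(m + 1)) := by
    push_cast; ring_nf
  rw [integral_congr_Ioo_of_le hx.1.le
      (fun ξ hξ => hRodrigues (m + 1) α β ξ ⟨hξ.1, hξ.2.trans hx.2⟩),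
    intervalIntegral.integral_const_mul,
    integral_iteratedDeriv_succ_jacobiWeight _ (by push_cast; linarith) hx,
    mul_assoc, Nat.add_sub_cancel, hRodrigues m _ _ x hx, hshift]
  field_simp
  push_cast [Nat.factorial_succ, pow_succ]
  ring

open intervalIntegral in
/-- Incomplete integral of Jacobi polynomials via the Rodrigues recursion:
for `i ≥ 1` and `x ∈ (-1,1)`,
`∫_{-1}^x P_i^{(α,β)} w^{(α,β)} = -(1/(2i)) P_{i-1}^{(α+1,β+1)}(x) w^{(α+1,β+1)}(x)`. -/
theorem stmt_19 (α β : ℝ) (hα : -1 < α) (hβ : -1 < β)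
    (w : ℝ → ℝ → ℝ → ℝ)
    (hw : ∀ a b ξ, w a b ξ = (1 - ξ) ^ a * (1 + ξ) ^ b)
    (Jac : ℕ → ℝ → ℝ → ℝ → ℝ)
    (hJac : ∀ (i : ℕ) (a b : ℝ), ∀ ξ ∈ Set.Ioo (-1 : ℝ) 1,
      Jac i a b ξ = (((-2 : ℝ)^i * (Nat.factorial i : ℝ)) * w a b ξ)⁻¹ *
        iteratedDeriv i (fun t => (1 - t) ^ (a + (i : ℝ)) * (1 + t) ^ (b + (i : ℝ))) ξ)
    (i : ℕ) (hi : 1 ≤ i) (x : ℝ) (hx : x ∈ Set.Ioo (-1 : ℝ) 1) :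
    ∫ ξ in (-1 : ℝ)..x, Jac i α β ξ * w α β ξ
      = -(1 / (2 * i)) * Jac (i-1) (α+1) (β+1) x * w (α+1) (β+1) x :=
  stmt_19_general α β hβ w hw Jac hJac i hi x hx
end
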